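/- arXiv:1806.11333 — 7 statements merged into one kernel-verified Lean document; each statement's English description precedes it below -/
import Mathlib

section
/- Every triangulation T on the sphere with at least 4 vertices has at most |V(T)| - 3 subgraphs isomorphic to K_4. -/
open SimpleGraph

/-- `H` is a minor of `G`: disjoint nonempty connected branch sets with edges
between the branch sets of adjacent vertices of `H`. -/
def GraphMinor {W V : Type} (H : SimpleGraph W) (G : SimpleGraph V) : Prop :=
  ∃ f : W → Set V,
    (∀ w, (f w).Nonempty) ∧
    (∀ w, (G.induce (f w)).Connected) ∧
    (∀ w w', w ≠ w' → Disjoint (f w) (f w')) ∧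
    (∀ w w', H.Adj w w' → ∃ x ∈ f w, ∃ y ∈ f w', G.Adj x y)

/-- A graph is planar iff it has no `K₅` minor and no `K_{3,3}` minor (Wagner's theorem). -/
def IsPlanar {V : Type} (G : SimpleGraph V) : Prop :=
  ¬ GraphMinor (completeGraph (Fin 5)) G ∧
  ¬ GraphMinor (completeBipartiteGraph (Fin 3) (Fin 3)) G

/-- A triangulation on the sphere: a maximal planar graph with at least 4 vertices. -/
def IsSphereTriangulation {V : Type} (T : SimpleGraph V) : Prop :=
  4 ≤ Nat.card V ∧ IsPlanar T ∧
    ∀ u v : V, u ≠ v → ¬ T.Adj u v →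
      ¬ IsPlanar (T ⊔ SimpleGraph.fromRel (fun a b => a = u ∧ b = v))

/-!
A planar graph has no `K₅` minor, and a graph with no `K_{k+1}` minor on `n ≥ k` vertices has
at most `n - k + 1` cliques of size `k`. Induct on the vertex set `A`. Take a `k`-clique `Q` and,
for `v ∈ A \ Q`, a maximal connected `C ⊆ A \ Q` containing `v`. Some `q ∈ Q` has no neighbour in
`C`, otherwise `C` and the vertices of `Q` are the branch sets of a `K_{k+1}` minor. Then every
`k`-clique lies in `C ∪ (Q \ {q})` or in `A \ C`, two proper subsets of `A` whose sizes add up to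
`|A| + k - 1`.
-/

namespace SimpleGraph

variable {V : Type} {G : SimpleGraph V}

/-- Nonemptiness of the branch sets is part of `Connected`. -/
def HasCompleteMinorIn (G : SimpleGraph V) (W : Type) (A : Set V) : Prop :=
  ∃ f : W → Set V, (∀ w, f w ⊆ A) ∧ (∀ w, (G.induce (f w)).Connected) ∧
    Pairwise (Function.onFun Disjoint f) ∧ Pairwise fun w w' => ∃ x ∈ f w, ∃ y ∈ f w', G.Adj x y

def cliqueSetIn (G : SimpleGraph V) (k : ℕ) (A : Set V) : Set (Finset V) :=
  {s | ↑s ⊆ A ∧ G.IsNClique k s}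

namespace HasCompleteMinorIn

variable {W W' : Type} {A B : Set V}

lemma mono (h : G.HasCompleteMinorIn W A) (hAB : A ⊆ B) : G.HasCompleteMinorIn W B := by
  obtain ⟨f, hA, hconn, hdisj, hadj⟩ := h
  exact ⟨f, fun w => (hA w).trans hAB, hconn, hdisj, hadj⟩

lemma congr (h : G.HasCompleteMinorIn W A) (e : W ≃ W') : G.HasCompleteMinorIn W' A := by
  obtain ⟨f, hA, hconn, hdisj, hadj⟩ := h
  exact ⟨f ∘ e.symm, fun w => hA _, fun w => hconn _,
    fun w w' hne => hdisj (e.symm.injective.ne hne), fun w w' hne => hadj (e.symm.injective.ne hne)⟩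

lemma graphMinor (h : G.HasCompleteMinorIn W Set.univ) : GraphMinor (completeGraph W) G := by
  obtain ⟨f, -, hconn, hdisj, hadj⟩ := h
  refine ⟨f, fun w => ?_, hconn, fun w w' => @hdisj w w', fun w w' => @hadj w w'⟩
  obtain ⟨⟨x, hx⟩⟩ := (hconn w).nonempty
  exact ⟨x, hx⟩

end HasCompleteMinorIn

lemma hasCompleteMinorIn_option_of_isClique {Q C : Set V} (hQ : G.IsClique Q)
    (hC : (G.induce C).Connected) (hCQ : Disjoint C Q) (hadj : ∀ q ∈ Q, ∃ c ∈ C, G.Adj q c) :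
    G.HasCompleteMinorIn (Option Q) (C ∪ Q) := by
  refine ⟨fun w => w.elim C fun q => {q.1}, ?_, ?_, ?_, ?_⟩
  · rintro (_ | q)
    · exact Set.subset_union_left
    · simp
  · rintro (_ | q)
    · exact hC
    · simp
  · rintro (_ | q) (_ | q') hne
    · exact absurd rfl hne
    · simpa [Function.onFun] using fun h => hCQ.notMem_of_mem_right q'.2 h
    · simpa [Function.onFun] using fun h => hCQ.notMem_of_mem_right q.2 h
    · simpa [Function.onFun, Subtype.ext_iff] using hne
  · rintro (_ | q) (_ | q') hne
    · exact absurd rfl hne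
    · obtain ⟨c, hc, hqc⟩ := hadj q' q'.2
      exact ⟨c, hc, q', rfl, hqc.symm⟩
    · obtain ⟨c, hc, hqc⟩ := hadj q q.2
      exact ⟨q, rfl, c, hc, hqc⟩
    · exact ⟨q, rfl, q', rfl, hQ q.2 q'.2 (by simpa [Subtype.ext_iff] using hne)⟩

lemma IsNClique.exists_forall_not_adj {k : ℕ} {Q : Finset V} (hQ : G.IsNClique k Q)
    {A C : Set V} (hA : ¬ G.HasCompleteMinorIn (Fin (k + 1)) A) (hQA : ↑Q ⊆ A) (hCA : C ⊆ A)
    (hC : (G.induce C).Connected) (hCQ : Disjoint C Q) :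
    ∃ q ∈ (Q : Set V), ∀ c ∈ C, ¬ G.Adj c q := by
  by_contra! hall
  have hminor := hasCompleteMinorIn_option_of_isClique hQ.isClique hC hCQ fun q hq => by
    obtain ⟨c, hc, hcq⟩ := hall q hq
    exact ⟨c, hc, hcq.symm⟩
  exact hA ((hminor.mono (Set.union_subset hCA hQA)).congr
    (Fintype.equivFinOfCardEq (by simp [hQ.card_eq])))

lemma exists_connected_closed_of_mem [Finite V] (G : SimpleGraph V) {S : Set V} {v : V}
    (hv : v ∈ S) :
    ∃ C ⊆ S, v ∈ C ∧ (G.induce C).Connected ∧ ∀ x ∈ C, ∀ y ∈ S, G.Adj x y → y ∈ C := by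
  obtain ⟨C, -, ⟨hCS, hvC, hC⟩, hmax⟩ := Finite.exists_le_maximal
    (p := fun C : Set V => C ⊆ S ∧ v ∈ C ∧ (G.induce C).Connected)
    ⟨Set.singleton_subset_iff.2 hv, rfl, by simp⟩
  refine ⟨C, hCS, hvC, hC, fun x hx y hy hxy => ?_⟩
  have hCy : (G.induce (C ∪ {y})).Connected :=
    connected_induce_union hC.preconnected (by simp) hx rfl hxy
  exact hmax ⟨Set.union_subset hCS (Set.singleton_subset_iff.2 hy), Or.inl hvC, hCy⟩
    Set.subset_union_left (Or.inr rfl)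

lemma IsClique.subset_or_subset_of_separates {s A C Q : Set V} {q : V} (hs : G.IsClique s)
    (hsA : s ⊆ A) (hC : ∀ x ∈ C, ∀ y ∈ A \ Q, G.Adj x y → y ∈ C) (hq : ∀ c ∈ C, ¬ G.Adj c q) :
    s ⊆ C ∪ (Q \ {q}) ∨ s ⊆ A \ C := by
  by_cases hmeet : ∃ x ∈ s, x ∈ C
  · obtain ⟨x, hxs, hxC⟩ := hmeet
    refine Or.inl fun y hys => ?_
    obtain rfl | hxy := eq_or_ne x y
    · exact Or.inl hxC
    have hadj : G.Adj x y := hs hxs hys hxy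
    by_cases hyQ : y ∈ Q
    · exact Or.inr ⟨hyQ, by rintro rfl; exact hq x hxC hadj⟩
    · exact Or.inl (hC x hxC y ⟨hsA hys, hyQ⟩ hadj)
  · push Not at hmeet
    exact Or.inr fun y hys => ⟨hsA hys, hmeet y hys⟩

lemma ncard_cliqueSetIn_le_one {k : ℕ} {Q : Finset V} (hQ : Q.card = k) :
    (G.cliqueSetIn k Q).ncard ≤ 1 := by
  have hsub : G.cliqueSetIn k Q ⊆ {Q} := fun s hs =>
    Finset.eq_of_subset_of_card_le (Finset.coe_subset.1 hs.1) (by rw [hs.2.card_eq, hQ])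
  simpa using Set.ncard_le_ncard hsub

theorem ncard_cliqueSetIn_le [Finite V] {k : ℕ} (A : Set V)
    (hA : ¬ G.HasCompleteMinorIn (Fin (k + 1)) A) :
    (G.cliqueSetIn k A).ncard ≤ A.ncard + 1 - k := by
  induction A using WellFoundedLT.induction with | ind A ih
  obtain hempty | ⟨Q, hQA, hQ⟩ := (G.cliqueSetIn k A).eq_empty_or_nonempty
  · simp [hempty]
  obtain ⟨v, hvA, hvQ⟩ | hAQ := (A \ Q).eq_empty_or_nonempty.symm
  · obtain ⟨C, hCS, hvC, hC, hCclosed⟩ := G.exists_connected_closed_of_mem (S := A \ Q) ⟨hvA, hvQ⟩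
    have hCA : C ⊆ A := hCS.trans Set.sdiff_subset
    have hCQ : Disjoint C Q := Set.disjoint_of_subset_left hCS Set.disjoint_sdiff_left
    obtain ⟨q, hqQ, hqC⟩ := hQ.exists_forall_not_adj hA hQA hCA hC hCQ
    set A₁ : Set V := C ∪ (Q \ {q})
    set A₂ : Set V := A \ C
    have hsplit : G.cliqueSetIn k A ⊆ G.cliqueSetIn k A₁ ∪ G.cliqueSetIn k A₂ := by
      rintro s ⟨hsA, hs⟩
      exact (hs.isClique.subset_or_subset_of_separates hsA hCclosed hqC).imp (⟨·, hs⟩) (⟨·, hs⟩)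
    have hA₁ : A₁ ⊂ A := (Set.ssubset_iff_of_subset
      (Set.union_subset hCA (Set.sdiff_subset.trans hQA))).2
      ⟨q, hQA hqQ, fun h => h.elim (hCQ.notMem_of_mem_right hqQ) fun hq => hq.2 rfl⟩
    have hA₂ : A₂ ⊂ A :=
      (Set.ssubset_iff_of_subset Set.sdiff_subset).2 ⟨v, hvA, fun h => h.2 hvC⟩
    have hcard₁ : A₁.ncard + 1 = C.ncard + k := by
      rw [Set.ncard_union_eq (Set.disjoint_of_subset_right Set.sdiff_subset hCQ), add_assoc,
        Set.ncard_sdiff_singleton_add_one hqQ, Set.ncard_coe_finset, hQ.card_eq]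
    have hcard₂ : A₂.ncard = A.ncard - C.ncard := Set.ncard_sdiff hCA
    have hcardA : C.ncard + k ≤ A.ncard := by
      rw [← hQ.card_eq, ← Set.ncard_coe_finset, ← Set.ncard_union_eq hCQ]
      exact Set.ncard_le_ncard (Set.union_subset hCA hQA)
    calc (G.cliqueSetIn k A).ncard
        ≤ (G.cliqueSetIn k A₁).ncard + (G.cliqueSetIn k A₂).ncard :=
          (Set.ncard_le_ncard hsplit).trans (Set.ncard_union_le _ _)
      _ ≤ (A₁.ncard + 1 - k) + (A₂.ncard + 1 - k) :=
          add_le_add (ih _ hA₁ fun h => hA (h.mono hA₁.subset))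
            (ih _ hA₂ fun h => hA (h.mono hA₂.subset))
      _ ≤ A.ncard + 1 - k := by omega
  · obtain rfl : A = Q := (Set.sdiff_eq_empty.1 hAQ).antisymm hQA
    have := ncard_cliqueSetIn_le_one (G := G) hQ.card_eq
    rw [Set.ncard_coe_finset, hQ.card_eq]
    omega

end SimpleGraph

/-- Every triangulation on the sphere (with at least 4 vertices) has at most
`|V(T)| - 3` subgraphs isomorphic to `K₄`, i.e. 4-cliques. -/
theorem sphere_triangulation_card_K4_le {V : Type} [Fintype V] (T : SimpleGraph V)
    (hT : IsSphereTriangulation T) :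
    {s : Finset V | T.IsNClique 4 s}.ncard ≤ Nat.card V - 3 := by
  have hK5 : ¬ T.HasCompleteMinorIn (Fin (4 + 1)) Set.univ := fun h => hT.2.1.1 h.graphMinor
  calc {s : Finset V | T.IsNClique 4 s}.ncard = (T.cliqueSetIn 4 Set.univ).ncard := by
        simp [cliqueSetIn]
    _ ≤ Nat.card V - 3 := by simpa using T.ncard_cliqueSetIn_le Set.univ hK5
end

section
/- If T is a triangulation on the sphere obtained from K_4 by a sequence of 3-vertex additions and T is not K_4 itself, then no two vertices of degree 3 in T are adjacent. -/
open SimpleGraph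

/-- Stacked triangulations: graphs obtained from `K₄` by a sequence of 3-vertex
additions (adding a new vertex inside a face and joining it to the three
boundary vertices; planarity of the result forces the triangle to bound a face). -/
inductive IsStacked : {V : Type} → SimpleGraph V → Prop
  | base {V : Type} (G : SimpleGraph V) (h : Nonempty (G ≃g completeGraph (Fin 4))) :
      IsStacked G
  | step {V : Type} (G : SimpleGraph V) (v : V)
      (hpl : IsPlanar G)
      (hdeg : (G.neighborSet v).ncard = 3)
      (htri : G.IsClique (G.neighborSet v))
      (hrest : IsStacked (G.induce {w | w ≠ v})) : IsStacked G

/-- Every vertex of a stacked triangulation has at least three distinct neighbors. -/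
lemma three_neighbors_aux : ∀ {V : Type} (G : SimpleGraph V), IsStacked G →
    ∀ v : V, ∃ a b c : V, a ≠ b ∧ a ≠ c ∧ b ≠ c ∧ G.Adj v a ∧ G.Adj v b ∧ G.Adj v c := by
  intro V G hG
  induction hG with
  | base G h =>
    intro v
    obtain ⟨e⟩ := h
    have hK : ∀ u : Fin 4, ∃ a b c : Fin 4, a ≠ b ∧ a ≠ c ∧ b ≠ c ∧
        u ≠ a ∧ u ≠ b ∧ u ≠ c := by decide
    obtain ⟨a, b, c, hab, hac, hbc, ha, hb, hc⟩ := hK (e v)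
    refine ⟨e.symm a, e.symm b, e.symm c, e.symm.toEquiv.injective.ne hab,
      e.symm.toEquiv.injective.ne hac, e.symm.toEquiv.injective.ne hbc, ?_, ?_, ?_⟩
    · have := e.symm.map_adj_iff.mpr (by simpa using ha); simpa using this
    · have := e.symm.map_adj_iff.mpr (by simpa using hb); simpa using this
    · have := e.symm.map_adj_iff.mpr (by simpa using hc); simpa using this
  | step G v hpl hdeg htri hrest ih =>
    intro u
    by_cases huv : u = v
    · subst huv
      obtain ⟨a, b, c, hab, hac, hbc, hs⟩ := Set.ncard_eq_three.mp hdeg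
      refine ⟨a, b, c, hab, hac, hbc, ?_, ?_, ?_⟩ <;>
        · rw [← SimpleGraph.mem_neighborSet, hs]; simp
    · obtain ⟨a, b, c, hab, hac, hbc, ha, hb, hc⟩ := ih ⟨u, huv⟩
      exact ⟨a.1, b.1, c.1, fun h => hab (Subtype.ext h), fun h => hac (Subtype.ext h),
        fun h => hbc (Subtype.ext h), ha, hb, hc⟩

lemma stacked_not_adj_aux : ∀ {V : Type} (G : SimpleGraph V), IsStacked G →
    ¬ Nonempty (G ≃g completeGraph (Fin 4)) →
    ∀ x y : V, (G.neighborSet x).ncard = 3 → (G.neighborSet y).ncard = 3 → ¬ G.Adj x y := by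
  intro V₀ G₀ hG
  induction hG with
  | base G h => intro hK; exact absurd h hK
  | @step V G v hpl hdeg htri hrest ih =>
    intro _ x y hx hy hxy
    -- any neighbor of v has at least 4 neighbors
    have key : ∀ a : V, G.Adj v a → (G.neighborSet a).ncard ≠ 3 := by
      intro a hva h3
      have hav : a ≠ v := (G.ne_of_adj hva).symm
      obtain ⟨n1, n2, n3, h12, h13, h23, hn1, hn2, hn3⟩ :=
        three_neighbors_aux _ hrest ⟨a, hav⟩
      have hsub : ({v, n1.1, n2.1, n3.1} : Set V) ⊆ G.neighborSet a := by
        intro w hw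
        rcases hw with rfl | rfl | rfl | rfl
        · exact hva.symm
        · exact hn1
        · exact hn2
        · exact hn3
      have hfin : (G.neighborSet a).Finite :=
        Set.finite_of_ncard_ne_zero (by rw [h3]; omega)
      have h4 : ({v, n1.1, n2.1, n3.1} : Set V).ncard = 4 := by
        rw [Set.ncard_insert_of_notMem (by
              simp only [Set.mem_insert_iff, Set.mem_singleton_iff, not_or]
              exact ⟨fun h => n1.2 h.symm, fun h => n2.2 h.symm, fun h => n3.2 h.symm⟩),
            Set.ncard_insert_of_notMem (by
              simp only [Set.mem_insert_iff, Set.mem_singleton_iff, not_or]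
              exact ⟨fun h => h12 (Subtype.ext h), fun h => h13 (Subtype.ext h)⟩),
            Set.ncard_insert_of_notMem (by
              simp only [Set.mem_singleton_iff]
              exact fun h => h23 (Subtype.ext h)),
            Set.ncard_singleton]
      have := Set.ncard_le_ncard hsub hfin
      omega
    have hxv : x ≠ v := fun h => key y (h ▸ hxy) hy
    have hyv : y ≠ v := fun h => key x (h ▸ hxy.symm) hx
    have hxNv : ¬ G.Adj v x := fun h => key x h hx
    have hyNv : ¬ G.Adj v y := fun h => key y h hy
    have himg : ∀ (z : V) (hz : z ≠ v), ¬ G.Adj v z →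
        ((G.induce {w | w ≠ v}).neighborSet ⟨z, hz⟩).ncard = (G.neighborSet z).ncard := by
      intro z hz hnadj
      have heq : G.neighborSet z =
          Subtype.val '' ((G.induce {w | w ≠ v}).neighborSet ⟨z, hz⟩) := by
        ext u
        constructor
        · intro h
          have huv : u ≠ v := fun he => hnadj (by rw [← he]; exact h.symm)
          exact ⟨⟨u, huv⟩, h, rfl⟩
        · rintro ⟨⟨u', hu'⟩, hadj, rfl⟩
          exact hadj
      rw [heq, Set.ncard_image_of_injective _ Subtype.val_injective]
    by_cases hk4 : Nonempty ((G.induce {w | w ≠ v}) ≃g completeGraph (Fin 4))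
    · obtain ⟨e⟩ := hk4
      have hcard : Nat.card ↥{w | w ≠ v} = 4 := by
        rw [Nat.card_congr e.toEquiv, Nat.card_eq_fintype_card]; simp
      have : Finite ↥{w | w ≠ v} := Nat.finite_of_card_ne_zero (by omega)
      obtain ⟨a, b, c, hab, hac, hbc, hNv⟩ := Set.ncard_eq_three.mp hdeg
      have hamem : a ∈ G.neighborSet v := by rw [hNv]; simp
      have hbmem : b ∈ G.neighborSet v := by rw [hNv]; simp
      have hcmem : c ∈ G.neighborSet v := by rw [hNv]; simp
      have hax : x ≠ a := fun h => hxNv (h ▸ hamem)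
      have hbx : x ≠ b := fun h => hxNv (h ▸ hbmem)
      have hcx : x ≠ c := fun h => hxNv (h ▸ hcmem)
      have hay : y ≠ a := fun h => hyNv (h ▸ hamem)
      have hby : y ≠ b := fun h => hyNv (h ▸ hbmem)
      have hcy : y ≠ c := fun h => hyNv (h ▸ hcmem)
      have hxyne : x ≠ y := G.ne_of_adj hxy
      have hav : a ≠ v := fun h => G.irrefl (h ▸ hamem)
      have hbv : b ≠ v := fun h => G.irrefl (h ▸ hbmem)
      have hcv : c ≠ v := fun h => G.irrefl (h ▸ hcmem)
      set S : Set ↥{w | w ≠ v} :=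
        {⟨x, hxv⟩, ⟨y, hyv⟩, ⟨a, hav⟩, ⟨b, hbv⟩, ⟨c, hcv⟩} with hS
      have h5 : S.ncard = 5 := by
        rw [hS, Set.ncard_insert_of_notMem (by
              simp only [Set.mem_insert_iff, Set.mem_singleton_iff, not_or, Subtype.mk.injEq]
              exact ⟨hxyne, hax, hbx, hcx⟩),
            Set.ncard_insert_of_notMem (by
              simp only [Set.mem_insert_iff, Set.mem_singleton_iff, not_or, Subtype.mk.injEq]
              exact ⟨hay, hby, hcy⟩),
            Set.ncard_insert_of_notMem (by
              simp only [Set.mem_insert_iff, Set.mem_singleton_iff, not_or, Subtype.mk.injEq]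
              exact ⟨hab, hac⟩),
            Set.ncard_insert_of_notMem (by
              simp only [Set.mem_singleton_iff, Subtype.mk.injEq]
              exact hbc),
            Set.ncard_singleton]
      have hle := Set.ncard_le_ncard (Set.subset_univ S) Set.finite_univ
      rw [Set.ncard_univ, hcard] at hle
      omega
    · exact ih hk4 ⟨x, hxv⟩ ⟨y, hyv⟩
        (by rw [himg x hxv hxNv]; exact hx)
        (by rw [himg y hyv hyNv]; exact hy)
        hxy

/-- In a stacked triangulation other than `K₄` itself, no two vertices of
degree 3 are adjacent. -/
theorem stacked_degree_three_not_adjacent {V : Type} [Fintype V] [DecidableEq V]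
    (T : SimpleGraph V) [DecidableRel T.Adj]
    (hT : IsStacked T) (hK : ¬ Nonempty (T ≃g completeGraph (Fin 4))) :
    ∀ x y : V, T.degree x = 3 → T.degree y = 3 → ¬ T.Adj x y := by
  have hdn : ∀ z : V, (T.neighborSet z).ncard = T.degree z := by
    intro z
    simp [SimpleGraph.degree, SimpleGraph.neighborFinset, Set.ncard_eq_toFinset_card']
  intro x y hx hy
  exact stacked_not_adj_aux T hT hK x y (by rw [hdn]; exact hx) (by rw [hdn]; exact hy)
end

section
/- Every triangulation on the sphere obtained from K_4 by a nonempty sequence of 3-vertex additions has at least two vertices of degree 3. -/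
open SimpleGraph

/-! The last added vertex `v` has degree 3, and we induct along the stacking with the stronger
claim that there are two *non-adjacent* vertices of degree 3. Since the neighbourhood of `v` is a
triangle, at most one of the two vertices given by induction is adjacent to `v`; the other keeps
its degree, and forms the new pair together with `v`. The induction starts at five vertices,
where removing `v` leaves `K₄` and the one vertex not adjacent to `v` has degree 3. -/

namespace SimpleGraph

variable {V : Type*} {G : SimpleGraph V}

lemma ncard_neighborSet_eq_degree (v : V) [Fintype (G.neighborSet v)] :
    (G.neighborSet v).ncard = G.degree v := by
  rw [← card_neighborSet_eq_degree, Set.ncard_eq_toFinset_card', Set.toFinset_card]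

lemma ncard_neighborSet_induce_of_subset {s : Set V} (v : s) (h : G.neighborSet v ⊆ s) :
    ((G.induce s).neighborSet v).ncard = (G.neighborSet v).ncard :=
  show (Subtype.val ⁻¹' G.neighborSet v).ncard = _ from
    Set.ncard_preimage_of_injective_subset_range Subtype.val_injective (by rwa [Subtype.range_coe])

lemma exists_not_adj_of_induce_eq_top [Finite V] {v : V} (htop : G.induce {w | w ≠ v} = ⊤)
    (hv : (G.neighborSet v).ncard + 2 ≤ Nat.card V) :
    ∃ u, u ≠ v ∧ ¬ G.Adj v u ∧ (G.neighborSet u).ncard + 2 = Nat.card V := by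
  have hlt : (insert v (G.neighborSet v)).ncard < (Set.univ : Set V).ncard := by
    rw [Set.ncard_univ]
    exact (Set.ncard_insert_le _ _).trans_lt (by omega)
  obtain ⟨u, -, hu⟩ := Set.exists_mem_notMem_of_ncard_lt_ncard hlt
  simp only [Set.mem_insert_iff, mem_neighborSet, not_or] at hu
  obtain ⟨huv, hvu⟩ := hu
  have hN : G.neighborSet u = {u, v}ᶜ := by
    ext w
    simp only [mem_neighborSet, Set.mem_compl_iff, Set.mem_insert_iff, Set.mem_singleton_iff,
      not_or]
    refine ⟨fun huw => ⟨(G.ne_of_adj huw).symm, fun hwv => hvu (hwv ▸ huw.symm)⟩,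
      fun ⟨hwu, hwv⟩ => ?_⟩
    show (G.induce {w | w ≠ v}).Adj ⟨u, huv⟩ ⟨w, hwv⟩
    simp [htop, Ne.symm hwu]
  refine ⟨u, huv, hvu, ?_⟩
  rw [hN, ← Set.ncard_pair huv, add_comm, Set.ncard_add_ncard_compl]

end SimpleGraph

open SimpleGraph

lemma Nat.card_setOf_ne_add_one {V : Type*} (v : V) [Finite {w | w ≠ v}] :
    Nat.card {w | w ≠ v} + 1 = Nat.card V := by
  classical
  rw [← Finite.card_option]
  exact Nat.card_congr (Equiv.optionSubtypeNe v)

namespace IsStacked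

variable {V : Type} {G : SimpleGraph V}

lemma four_le_card (h : IsStacked G) : 4 ≤ Nat.card V := by
  induction h with
  | base G h =>
    obtain ⟨e⟩ := h
    simp [Nat.card_congr e.toEquiv]
  | step G v _ _ _ _ ih =>
    have : Finite {w | w ≠ v} := Nat.finite_of_card_ne_zero (by omega)
    have := Nat.card_setOf_ne_add_one v
    omega

lemma eq_top_of_card_eq_four (h : IsStacked G) (hc : Nat.card V = 4) : G = ⊤ := by
  induction h with
  | base G h =>
    obtain ⟨e⟩ := h
    ext x y
    simp [← e.map_adj_iff, e.injective.eq_iff]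
  | step G v _ _ _ hrest _ =>
    have := hrest.four_le_card
    have : Finite {w | w ≠ v} := Nat.finite_of_card_ne_zero (by omega)
    have := Nat.card_setOf_ne_add_one v
    omega

theorem exists_ne_not_adj_ncard_neighborSet_eq_three (h : IsStacked G) (h5 : 5 ≤ Nat.card V) :
    ∃ x y : V, x ≠ y ∧ ¬ G.Adj x y ∧
      (G.neighborSet x).ncard = 3 ∧ (G.neighborSet y).ncard = 3 := by
  induction h with
  | base G h =>
    obtain ⟨e⟩ := h
    simp [Nat.card_congr e.toEquiv] at h5
  | @step W G v _ hdeg htri hrest ih =>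
    have hrest4 := hrest.four_le_card
    have : Finite {w | w ≠ v} := Nat.finite_of_card_ne_zero (by omega)
    have hcard := Nat.card_setOf_ne_add_one v
    rcases hrest4.eq_or_lt with hrest4 | hrest5
    · have : Finite W := Nat.finite_of_card_ne_zero (by omega)
      obtain ⟨u, huv, hvu, hu⟩ :=
        exists_not_adj_of_induce_eq_top (hrest.eq_top_of_card_eq_four hrest4.symm) (by omega)
      exact ⟨v, u, huv.symm, hvu, hdeg, by omega⟩
    obtain ⟨x, y, hxy, hnxy, hx, hy⟩ := ih (by omega)
    have hkeep : ∀ z : {w | w ≠ v}, ¬ G.Adj v z →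
        (G.neighborSet z).ncard = ((G.induce {w | w ≠ v}).neighborSet z).ncard :=
      fun z hvz => (ncard_neighborSet_induce_of_subset z
        fun w hzw (hwv : w = v) => hvz (hwv ▸ hzw.symm)).symm
    have : ¬ G.Adj v x ∨ ¬ G.Adj v y := by
      by_contra! ⟨hvx, hvy⟩
      exact hnxy (htri hvx hvy (Subtype.coe_injective.ne hxy))
    rcases this with hvx | hvy
    · exact ⟨v, x, Ne.symm x.2, hvx, hdeg, (hkeep x hvx).trans hx⟩
    · exact ⟨v, y, Ne.symm y.2, hvy, hdeg, (hkeep y hvy).trans hy⟩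

end IsStacked

theorem stacked_two_degree_three_vertices_general {V : Type} [Fintype V]
    (T : SimpleGraph V) [DecidableRel T.Adj]
    (hT : IsStacked T) (h5 : 5 ≤ Nat.card V) :
    ∃ x y : V, x ≠ y ∧ T.degree x = 3 ∧ T.degree y = 3 := by
  obtain ⟨x, y, hxy, -, hx, hy⟩ := hT.exists_ne_not_adj_ncard_neighborSet_eq_three h5
  exact ⟨x, y, hxy, ncard_neighborSet_eq_degree (G := T) x ▸ hx,
    ncard_neighborSet_eq_degree (G := T) y ▸ hy⟩

/-- Every triangulation obtained from `K₄` by a nonempty sequence of 3-vertex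
additions (equivalently, a stacked triangulation with at least 5 vertices)
has at least two vertices of degree 3. -/
theorem stacked_two_degree_three_vertices {V : Type} [Fintype V] [DecidableEq V]
    (T : SimpleGraph V) [DecidableRel T.Adj]
    (hT : IsStacked T) (h5 : 5 ≤ Nat.card V) :
    ∃ x y : V, x ≠ y ∧ T.degree x = 3 ∧ T.degree y = 3 :=
  stacked_two_degree_three_vertices_general T hT h5
end

section
/- A simple complete multipartite graph is planar if and only if it is isomorphic to one of: K_{1,1,1,2}, K_4, K_{2,2,2}, K_{1,2,2}, K_{1,1,n}, K_{2,n}, or K_{1,n} for some natural number n ≥ 1. -/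
open SimpleGraph

/-- The complete tripartite graph `K_{a,b,c}`. -/
def KP3 (a b c : ℕ) : SimpleGraph (Fin a ⊕ Fin b ⊕ Fin c) :=
  (completeGraph (Fin 3)).comap
    (Sum.elim (fun _ => 0) (Sum.elim (fun _ => 1) (fun _ => 2)))

/-- The complete 4-partite graph `K_{a,b,c,d}`. -/
def KP4 (a b c d : ℕ) : SimpleGraph (Fin a ⊕ Fin b ⊕ Fin c ⊕ Fin d) :=
  (completeGraph (Fin 4)).comap
    (Sum.elim (fun _ => 0) (Sum.elim (fun _ => 1) (Sum.elim (fun _ => 2) (fun _ => 3))))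

/-!
The listed graphs are planar because each has a small vertex cover, and the vertex cover number
cannot grow under taking minors, while it is 4 for `K₅` and 3 for `K_{3,3}`: a cover by two
vertices handles `K_{1,n}`, `K_{2,n}`, `K_{1,1,n}`, and a cover by three vertices on at most five
vertices handles `K₄`, `K_{1,1,1,2}`, `K_{1,2,2}`. For the octahedron `K_{2,2,2}`, a `K₅` minor on
six vertices would leave a `K₄` in a 3-colourable graph, and a spanning `K_{3,3}` would have sides
that are unions of the parts, all of size two.

Conversely, five parts contain a `K₅`, and two disjoint groups of parts with at least three
vertices each contain a `K_{3,3}`. With the part sizes sorted, excluding such groups leaves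
exactly the listed graphs.
-/

open Finset

theorem Nat.card_subtype_sum {A B : Type} [Finite A] [Finite B] (q : A ⊕ B → Prop) :
    Nat.card {x // q x} = Nat.card {a // q (.inl a)} + Nat.card {b // q (.inr b)} := by
  rw [Nat.card_congr Equiv.subtypeSum, Nat.card_sum]

namespace GraphMinor

variable {W V V' : Type} {H : SimpleGraph W} {G : SimpleGraph V} {G' : SimpleGraph V'}

theorem of_isContained (h : H ⊑ G) : GraphMinor H G := by
  obtain ⟨c⟩ := h
  refine ⟨fun w => {c w}, fun w => Set.singleton_nonempty _, fun w => ?_,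
    fun w w' hw => Set.disjoint_singleton.2 (c.injective.ne hw),
    fun w w' hA => ⟨c w, rfl, c w', rfl, c.toHom.map_adj hA⟩⟩
  rw [induce_singleton_eq_top]
  exact connected_top

theorem map (h : GraphMinor H G) (c : G.Copy G') : GraphMinor H G' := by
  obtain ⟨f, hne, hconn, hdisj, hadj⟩ := h
  refine ⟨fun w => c '' f w, fun w => (hne w).image c, fun w => ?_,
    fun w w' hw => (Set.disjoint_image_iff c.injective).2 (hdisj w w' hw), fun w w' hA => ?_⟩
  · exact (hconn w).map (induceHom c.toHom (Set.mapsTo_image c (f w)))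
      (Set.surjective_mapsTo_image_restrict c (f w))
  · obtain ⟨x, hx, y, hy, hxy⟩ := hadj w w' hA
    exact ⟨c x, Set.mem_image_of_mem c hx, c y, Set.mem_image_of_mem c hy, c.toHom.map_adj hxy⟩

/-- The branch sets meeting a vertex cover of `G` form a vertex cover of `H`. -/
theorem vertexCoverNum_le (h : GraphMinor H G) : H.vertexCoverNum ≤ G.vertexCoverNum := by
  obtain ⟨f, -, -, hdisj, hadj⟩ := h
  obtain ⟨s, hs, hcover⟩ := G.vertexCoverNum_exists
  have hcover' : H.IsVertexCover {w | (f w ∩ s).Nonempty} := by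
    intro w w' hA
    obtain ⟨x, hx, y, hy, hxy⟩ := hadj w w' hA
    exact (hcover hxy).imp (fun hxs => ⟨x, hx, hxs⟩) (fun hys => ⟨y, hy, hys⟩)
  let g : {w | (f w ∩ s).Nonempty} → s := fun w => ⟨w.2.some, w.2.some_mem.2⟩
  have hg : Function.Injective g := by
    rintro ⟨w, hw⟩ ⟨w', hw'⟩ hgw
    have hsome : hw.some = hw'.some := congrArg Subtype.val hgw
    by_contra hne
    exact Set.disjoint_left.mp (hdisj w w' fun h => hne (Subtype.ext h)) hw.some_mem.1
      (hsome ▸ hw'.some_mem.1)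
  exact hs ▸ hcover'.vertexCoverNum_le.trans (Function.Embedding.encard_le ⟨g, hg⟩)

/-- `S` is the set of singleton branch sets. Every other branch set holds a second vertex besides
its representative, so there are at most `card V - card W` of them. -/
theorem exists_induce_isContained [Fintype W] [Fintype V] (h : GraphMinor H G) :
    ∃ S : Finset W, 2 * Fintype.card W ≤ #S + Fintype.card V ∧ H.induce (S : Set W) ⊑ G := by
  classical
  obtain ⟨f, hne, -, hdisj, hadj⟩ := h
  choose x hx using hne
  have mem_unique : ∀ {w w' v}, v ∈ f w → v ∈ f w' → w = w' := fun {w w' v} hv hv' => by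
    by_contra hww
    exact Set.disjoint_left.mp (hdisj w w' hww) hv hv'
  let S : Finset W := {w | f w ⊆ {x w}}
  have hsecond : ∀ w : ↥Sᶜ, ∃ y ∈ f w, y ≠ x w := fun ⟨w, hw⟩ => by
    simpa [S, Set.subset_singleton_iff] using hw
  choose y hyf hyx using hsecond
  have hinj : Function.Injective (Sum.elim x y) := by
    rintro (w | w) (w' | w') he <;> simp only [Sum.elim_inl, Sum.elim_inr] at he
    · rw [mem_unique (hx w) (he ▸ hx w')]
    · obtain rfl := mem_unique (hyf w') (he ▸ hx w)
      exact absurd he.symm (hyx w')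
    · obtain rfl := mem_unique (hyf w) (he ▸ hx w')
      exact absurd he (hyx w)
    · rw [Subtype.ext (mem_unique (hyf w) (he ▸ hyf w'))]
  refine ⟨S, ?_, ⟨⟨fun w => x w, fun {w w'} hA => ?_⟩, fun w w' he => Subtype.ext ?_⟩⟩
  · have := Fintype.card_le_of_injective _ hinj
    rw [Fintype.card_sum, Fintype.card_coe, card_compl] at this
    have := S.card_le_univ
    omega
  · obtain ⟨a, ha, b, hb, hab⟩ := hadj w w' hA
    rwa [(mem_filter.mp w.2).2 ha, (mem_filter.mp w'.2).2 hb] at hab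
  · exact mem_unique (hx w) ((show x w = x w' from he) ▸ hx w')

theorem card_le [Fintype W] [Fintype V] (h : GraphMinor H G) :
    Fintype.card W ≤ Fintype.card V := by
  obtain ⟨S, hS, -⟩ := h.exists_induce_isContained
  have := S.card_le_univ
  omega

theorem isContained_of_card_le [Fintype W] [Fintype V] (h : GraphMinor H G)
    (hcard : Fintype.card V ≤ Fintype.card W) : H ⊑ G := by
  obtain ⟨S, hS, hSG⟩ := h.exists_induce_isContained
  obtain rfl : S = univ := eq_univ_of_card S (by have := S.card_le_univ; omega)
  rw [coe_univ] at hSG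
  exact (induceUnivIso H).symm.toCopy.isContained.trans hSG

theorem not_cliqueFree [Fintype W] [Fintype V] (h : GraphMinor (completeGraph W) G) :
    ¬ G.CliqueFree (2 * Fintype.card W - Fintype.card V) := by
  obtain ⟨S, hS, hSG⟩ := h.exists_induce_isContained
  rw [induce_top] at hSG
  have hcard : 2 * Fintype.card W - Fintype.card V ≤ Fintype.card (S : Set W) := by
    simp only [coe_sort_coe, Fintype.card_coe]
    omega
  have hK : completeGraph (Fin (Fintype.card (S : Set W))) ⊑ G :=
    (Iso.completeGraph (Fintype.equivFin _).symm).toCopy.isContained.trans hSG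
  exact fun hfree => hK.not_cliqueFree (hfree.mono hcard)

end GraphMinor

section Planarity

variable {V V' : Type} {G : SimpleGraph V} {G' : SimpleGraph V'}

theorem IsPlanar.of_isContained (hG' : IsPlanar G') (h : G ⊑ G') : IsPlanar G :=
  ⟨fun hm => hG'.1 (hm.map h.some), fun hm => hG'.2 (hm.map h.some)⟩

theorem three_le_vertexCoverNum_completeBipartiteGraph :
    3 ≤ (completeBipartiteGraph (Fin 3) (Fin 3)).vertexCoverNum := by
  obtain ⟨s, hs, hcover⟩ := (completeBipartiteGraph (Fin 3) (Fin 3)).vertexCoverNum_exists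
  have hside : Set.range Sum.inl ⊆ s ∨ Set.range Sum.inr ⊆ s := by
    by_contra! h
    obtain ⟨⟨_, ⟨i, rfl⟩, hi⟩, ⟨_, ⟨j, rfl⟩, hj⟩⟩ :=
      And.imp Set.not_subset.mp Set.not_subset.mp h
    exact (hcover (show (completeBipartiteGraph _ _).Adj (.inl i) (.inr j) by simp)).elim hi hj
  rw [← hs]
  rcases hside with h | h
  · exact le_trans (by simp) (Sum.inl_injective.encard_range.trans (Set.encard_le_encard h))
  · exact le_trans (by simp) (Sum.inr_injective.encard_range.trans (Set.encard_le_encard h))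

theorem not_graphMinor_K5_of_vertexCoverNum_le (h : G.vertexCoverNum ≤ 3) :
    ¬ GraphMinor (completeGraph (Fin 5)) G := fun hm => by
  have := hm.vertexCoverNum_le.trans h
  norm_num at this

theorem not_graphMinor_K33_of_vertexCoverNum_le (h : G.vertexCoverNum ≤ 2) :
    ¬ GraphMinor (completeBipartiteGraph (Fin 3) (Fin 3)) G := fun hm => by
  have := (three_le_vertexCoverNum_completeBipartiteGraph.trans hm.vertexCoverNum_le).trans h
  norm_num at this

theorem isPlanar_of_vertexCoverNum_le_two (h : G.vertexCoverNum ≤ 2) : IsPlanar G :=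
  ⟨not_graphMinor_K5_of_vertexCoverNum_le (h.trans (by norm_num)),
    not_graphMinor_K33_of_vertexCoverNum_le h⟩

theorem isPlanar_of_vertexCoverNum_le_three [Fintype V] (h : G.vertexCoverNum ≤ 3)
    (hV : Fintype.card V ≤ 5) : IsPlanar G :=
  ⟨not_graphMinor_K5_of_vertexCoverNum_le h, fun hm => by
    have := hm.card_le
    simp only [Fintype.card_sum, Fintype.card_fin] at this
    omega⟩

theorem not_graphMinor_K5_of_colorable [Fintype V] (hc : G.Colorable 3)
    (hV : Fintype.card V ≤ 6) : ¬ GraphMinor (completeGraph (Fin 5)) G := fun hm =>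
  hm.not_cliqueFree (hc.cliqueFree (by simp only [Fintype.card_fin]; omega))

end Planarity

section LabelledCompleteMultipartite

variable {α κ : Type} (p : α → κ)

theorem vertexCoverNum_comap_top_le [Finite α] (k : κ) :
    ((⊤ : SimpleGraph κ).comap p).vertexCoverNum ≤ Nat.card {x // p x ≠ k} := by
  have hcover : ((⊤ : SimpleGraph κ).comap p).IsVertexCover {x | p x ≠ k} := by
    intro x y hxy
    by_contra! h
    simp only [Set.mem_ofPred_eq, not_not] at h
    exact hxy (h.1.trans h.2.symm)
  refine hcover.vertexCoverNum_le.trans_eq ?_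
  rw [← ENat.card_coe_set_eq, ENat.card_eq_coe_natCard]
  rfl

/-- In a spanning `K_{3,3}`, vertices with the same label are non-adjacent, hence on the same
side; so each side is a union of fibres of `p`. -/
theorem not_K33_isContained_comap_top_of_even [Fintype α] (hα : Fintype.card α ≤ 6)
    (heven : ∀ k, Even (Nat.card {x // p x = k})) :
    ¬ completeBipartiteGraph (Fin 3) (Fin 3) ⊑ (⊤ : SimpleGraph κ).comap p := by
  classical
  rintro ⟨c⟩
  have hbij : Function.Bijective c := (Fintype.bijective_iff_injective_and_card c).2
    ⟨c.injective, le_antisymm (Fintype.card_le_of_injective c c.injective) (by simpa using hα)⟩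
  let L : Finset α := univ.map ⟨c ∘ Sum.inl, c.injective.comp Sum.inl_injective⟩
  have hL : #L = 3 := by simp [L]
  have hclosed : ∀ a ∈ L, ∀ b, p b = p a → b ∈ L := by
    intro a ha b hb
    obtain ⟨i, -, rfl⟩ := mem_map.mp ha
    obtain ⟨j | j, rfl⟩ := hbij.2 b
    · exact mem_map_of_mem _ (mem_univ j)
    · have hadj : (completeBipartiteGraph (Fin 3) (Fin 3)).Adj (.inl i) (.inr j) := by simp
      exact absurd hb.symm (c.toHom.map_adj hadj)
  have hLeven : Even #L := by
    rw [card_eq_sum_card_image p L]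
    refine even_sum _ fun k hk => ?_
    obtain ⟨a, ha, rfl⟩ := mem_image.mp hk
    have hfib : L.filter (fun b => p b = p a) = univ.filter (fun b => p b = p a) := by
      ext b
      simp only [mem_filter, mem_univ, true_and, and_iff_right_iff_imp]
      exact hclosed a ha b
    rw [hfib, ← Fintype.card_subtype, ← Nat.card_eq_fintype_card]
    exact heven (p a)
  rw [hL] at hLeven
  exact absurd hLeven (by decide)

theorem isPlanar_comap_top_of_even (p : α → Fin 3) [Fintype α] (hα : Fintype.card α ≤ 6)
    (heven : ∀ k, Even (Nat.card {x // p x = k})) :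
    IsPlanar ((⊤ : SimpleGraph (Fin 3)).comap p) :=
  ⟨not_graphMinor_K5_of_colorable ⟨Coloring.mk p fun h => h⟩ hα, fun hm =>
    not_K33_isContained_comap_top_of_even p hα heven
      (hm.isContained_of_card_le (by simpa using hα))⟩

theorem nonempty_iso_comap_top [Finite α] {ι : Type} {V : ι → Type} [∀ i, Finite (V i)]
    (e : κ ≃ ι) (h : ∀ k, Nat.card (V (e k)) = Nat.card {x // p x = k}) :
    Nonempty (completeMultipartiteGraph V ≃g (⊤ : SimpleGraph κ).comap p) := by
  have E : ∀ k, {x // p x = k} ≃ V (e k) := fun k => (Finite.card_eq.mp (h k).symm).some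
  let F : α ≃ Σ i, V i := (Equiv.sigmaFiberEquiv p).symm.trans (Equiv.sigmaCongr e E)
  exact ⟨(⟨F, e.injective.ne_iff⟩ : (⊤ : SimpleGraph κ).comap p ≃g _).symm⟩

end LabelledCompleteMultipartite

def KP3.part (a b c : ℕ) : Fin a ⊕ Fin b ⊕ Fin c → Fin 3 :=
  Sum.elim (fun _ => 0) (Sum.elim (fun _ => 1) (fun _ => 2))

def KP4.part (a b c d : ℕ) : Fin a ⊕ Fin b ⊕ Fin c ⊕ Fin d → Fin 4 :=
  Sum.elim (fun _ => 0) (Sum.elim (fun _ => 1) (Sum.elim (fun _ => 2) (fun _ => 3)))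

def SimpleGraph.completeBipartiteGraph.side (A B : Type) : A ⊕ B → Fin 2 :=
  Sum.elim (fun _ => 0) (fun _ => 1)

theorem KP3.card_part (a b c : ℕ) (k : Fin 3) :
    Nat.card {x // KP3.part a b c x = k} = ![a, b, c] k := by
  fin_cases k <;> simp only [KP3.part, Nat.card_subtype_sum, Sum.elim_inl, Sum.elim_inr] <;> simp

theorem KP4.card_part (a b c d : ℕ) (k : Fin 4) :
    Nat.card {x // KP4.part a b c d x = k} = ![a, b, c, d] k := by
  fin_cases k <;> simp only [KP4.part, Nat.card_subtype_sum, Sum.elim_inl, Sum.elim_inr] <;> simp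

theorem SimpleGraph.completeBipartiteGraph.card_side (m n : ℕ) (k : Fin 2) :
    Nat.card {x // completeBipartiteGraph.side (Fin m) (Fin n) x = k} = ![m, n] k := by
  fin_cases k <;> simp only [completeBipartiteGraph.side, Nat.card_subtype_sum, Sum.elim_inl,
    Sum.elim_inr] <;> simp

theorem completeBipartiteGraph_eq_comap_side (A B : Type) :
    completeBipartiteGraph A B =
      (⊤ : SimpleGraph (Fin 2)).comap (completeBipartiteGraph.side A B) := by
  ext (a | a) (b | b) <;> simp [completeBipartiteGraph.side]

theorem isPlanar_KP3_one_one (n : ℕ) : IsPlanar (KP3 1 1 n) := by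
  refine isPlanar_of_vertexCoverNum_le_two
    ((vertexCoverNum_comap_top_le (KP3.part 1 1 n) 2).trans ?_)
  simp only [KP3.part, Nat.card_subtype_sum, Sum.elim_inl, Sum.elim_inr]
  simp

theorem isPlanar_completeBipartiteGraph {m : ℕ} (hm : m ≤ 2) (n : ℕ) :
    IsPlanar (completeBipartiteGraph (Fin m) (Fin n)) := by
  rw [completeBipartiteGraph_eq_comap_side]
  refine isPlanar_of_vertexCoverNum_le_two ((vertexCoverNum_comap_top_le _ 1).trans ?_)
  simp only [completeBipartiteGraph.side, Nat.card_subtype_sum, Sum.elim_inl, Sum.elim_inr]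
  simpa using hm

theorem isPlanar_KP3_one_two_two : IsPlanar (KP3 1 2 2) := by
  refine isPlanar_of_vertexCoverNum_le_three
    ((vertexCoverNum_comap_top_le (KP3.part 1 2 2) 2).trans ?_) (by simp)
  simp only [KP3.part, Nat.card_subtype_sum, Sum.elim_inl, Sum.elim_inr]
  simp

theorem isPlanar_KP4_one_one_one_two : IsPlanar (KP4 1 1 1 2) := by
  refine isPlanar_of_vertexCoverNum_le_three
    ((vertexCoverNum_comap_top_le (KP4.part 1 1 1 2) 3).trans ?_) (by simp)
  simp only [KP4.part, Nat.card_subtype_sum, Sum.elim_inl, Sum.elim_inr]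
  simp

theorem isPlanar_completeGraph_fin_four : IsPlanar (completeGraph (Fin 4)) :=
  isPlanar_of_vertexCoverNum_le_three (by norm_num) (by simp)

theorem isPlanar_KP3_two_two_two : IsPlanar (KP3 2 2 2) :=
  isPlanar_comap_top_of_even (KP3.part 2 2 2) (by simp) fun k => by
    rw [KP3.card_part]
    fin_cases k <;> decide

def IsPlanarMultipartiteShape {α : Type} (G : SimpleGraph α) : Prop :=
  Nonempty (G ≃g KP4 1 1 1 2) ∨ Nonempty (G ≃g completeGraph (Fin 4)) ∨
    Nonempty (G ≃g KP3 2 2 2) ∨ Nonempty (G ≃g KP3 1 2 2) ∨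
    ∃ n : ℕ, 1 ≤ n ∧
      (Nonempty (G ≃g KP3 1 1 n) ∨ Nonempty (G ≃g completeBipartiteGraph (Fin 2) (Fin n)) ∨
        Nonempty (G ≃g completeBipartiteGraph (Fin 1) (Fin n)))

namespace IsPlanarMultipartiteShape

variable {α β : Type} {G : SimpleGraph α} {G' : SimpleGraph β}

theorem isPlanar (h : IsPlanarMultipartiteShape G) : IsPlanar G := by
  rcases h with e | e | e | e | ⟨n, -, e | e | e⟩
  · exact isPlanar_KP4_one_one_one_two.of_isContained (e.map Iso.toCopy)
  · exact isPlanar_completeGraph_fin_four.of_isContained (e.map Iso.toCopy)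
  · exact isPlanar_KP3_two_two_two.of_isContained (e.map Iso.toCopy)
  · exact isPlanar_KP3_one_two_two.of_isContained (e.map Iso.toCopy)
  · exact (isPlanar_KP3_one_one n).of_isContained (e.map Iso.toCopy)
  · exact (isPlanar_completeBipartiteGraph le_rfl n).of_isContained (e.map Iso.toCopy)
  · exact (isPlanar_completeBipartiteGraph one_le_two n).of_isContained (e.map Iso.toCopy)

theorem of_iso (h : IsPlanarMultipartiteShape G') (e : G ≃g G') :
    IsPlanarMultipartiteShape G := by
  rcases h with f | f | f | f | ⟨n, hn, f | f | f⟩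
  exacts [.inl (f.map e.trans), .inr (.inl (f.map e.trans)), .inr (.inr (.inl (f.map e.trans))),
    .inr (.inr (.inr (.inl (f.map e.trans)))),
    .inr (.inr (.inr (.inr ⟨n, hn, .inl (f.map e.trans)⟩))),
    .inr (.inr (.inr (.inr ⟨n, hn, .inr (.inl (f.map e.trans))⟩))),
    .inr (.inr (.inr (.inr ⟨n, hn, .inr (.inr (f.map e.trans))⟩)))]

end IsPlanarMultipartiteShape

theorem exists_equiv_fin_monotone {ι β : Type} [Fintype ι] [LinearOrder β] (f : ι → β) :
    ∃ e : Fin (Fintype.card ι) ≃ ι, Monotone (f ∘ e) :=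
  ⟨(Tuple.sort (f ∘ (Fintype.equivFin ι).symm)).trans (Fintype.equivFin ι).symm,
    Tuple.monotone_sort (f ∘ (Fintype.equivFin ι).symm)⟩

namespace SimpleGraph.completeMultipartiteGraph

variable {ι : Type} {V : ι → Type}

def isoOfEquiv {κ : Type} (e : κ ≃ ι) :
    completeMultipartiteGraph (V ∘ e) ≃g completeMultipartiteGraph V :=
  ⟨Equiv.sigmaCongrLeft e, e.injective.ne_iff⟩

theorem nonempty_iso_completeGraph [∀ i, Finite (V i)] [Finite ι] (h : ∀ i, Nat.card (V i) = 1) :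
    Nonempty (completeMultipartiteGraph V ≃g completeGraph ι) := by
  simpa using nonempty_iso_comap_top (id : ι → ι) (Equiv.refl ι) fun i => by simp [h]

theorem card_le_four_of_isPlanar [Fintype ι] (hne : ∀ i, Nonempty (V i))
    (hP : IsPlanar (completeMultipartiteGraph V)) : Fintype.card ι ≤ 4 := by
  by_contra! h
  exact hP.1 (.of_isContained ((not_cliqueFree_iff_top_isContained 5).mp
    (not_cliqueFree_of_le_card V (fun i => (hne i).some) h)))

variable [∀ i, Fintype (V i)]

/-- Two disjoint groups of parts with at least three vertices each span a `K_{3,3}`. -/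
theorem sum_card_lt_three_of_isPlanar (hP : IsPlanar (completeMultipartiteGraph V))
    {I J : Finset ι} (hIJ : Disjoint I J) :
    ∑ i ∈ I, Nat.card (V i) < 3 ∨ ∑ j ∈ J, Nat.card (V j) < 3 := by
  by_contra! h
  obtain ⟨L, hL, hLcard⟩ := exists_subset_card_eq (s := I.sigma fun _ => univ) (n := 3)
    (by simpa [card_sigma] using h.1)
  obtain ⟨R, hR, hRcard⟩ := exists_subset_card_eq (s := J.sigma fun _ => univ) (n := 3)
    (by simpa [card_sigma] using h.2)
  refine hP.2 (.of_isContained (completeBipartiteGraph_isContained_iff.mpr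
    ⟨L, R, by simpa using hLcard, by simpa using hRcard, fun x hx y hy hxy => ?_⟩))
  have hxI : x.1 ∈ I := (mem_sigma.mp (hL hx)).1
  have hyJ : y.1 ∈ J := (mem_sigma.mp (hR hy)).1
  exact Finset.disjoint_left.mp hIJ hxI (hxy ▸ hyJ)

theorem nonempty_iso_completeBipartiteGraph (V : Fin 2 → Type) [∀ t, Finite (V t)] :
    Nonempty (completeMultipartiteGraph V ≃g
      completeBipartiteGraph (Fin (Nat.card (V 0))) (Fin (Nat.card (V 1)))) := by
  rw [completeBipartiteGraph_eq_comap_side]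
  refine nonempty_iso_comap_top _ (Equiv.refl _) fun k => ?_
  rw [completeBipartiteGraph.card_side]
  fin_cases k <;> rfl

theorem nonempty_iso_KP3 (V : Fin 3 → Type) [∀ t, Finite (V t)] :
    Nonempty (completeMultipartiteGraph V ≃g
      KP3 (Nat.card (V 0)) (Nat.card (V 1)) (Nat.card (V 2))) :=
  nonempty_iso_comap_top (KP3.part _ _ _) (Equiv.refl _) fun k => by
    rw [KP3.card_part]
    fin_cases k <;> rfl

theorem nonempty_iso_KP4 (V : Fin 4 → Type) [∀ t, Finite (V t)] :
    Nonempty (completeMultipartiteGraph V ≃g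
      KP4 (Nat.card (V 0)) (Nat.card (V 1)) (Nat.card (V 2)) (Nat.card (V 3))) :=
  nonempty_iso_comap_top (KP4.part _ _ _ _) (Equiv.refl _) fun k => by
    rw [KP4.card_part]
    fin_cases k <;> rfl

theorem isPlanarMultipartiteShape_of_fin_two {V : Fin 2 → Type} [∀ t, Fintype (V t)]
    (hne : ∀ t, Nonempty (V t)) (hmono : Monotone fun t => Nat.card (V t))
    (hP : IsPlanar (completeMultipartiteGraph V)) :
    IsPlanarMultipartiteShape (completeMultipartiteGraph V) := by
  have hsum := sum_card_lt_three_of_isPlanar hP (I := {0}) (J := {1}) (by decide)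
  have hpos : ∀ t, 0 < Nat.card (V t) := fun t => Nat.card_pos_iff.mpr ⟨hne t, inferInstance⟩
  have h01 : Nat.card (V 0) ≤ Nat.card (V 1) := hmono (by decide)
  simp only [sum_singleton] at hsum
  obtain ⟨e⟩ := nonempty_iso_completeBipartiteGraph V
  refine .inr <| .inr <| .inr <| .inr ⟨Nat.card (V 1), hpos 1, ?_⟩
  obtain h | h : Nat.card (V 0) = 2 ∨ Nat.card (V 0) = 1 := by have := hpos 0; omega
  · rw [h] at e
    exact .inr (.inl ⟨e⟩)
  · rw [h] at e
    exact .inr (.inr ⟨e⟩)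

theorem isPlanarMultipartiteShape_of_fin_three {V : Fin 3 → Type} [∀ t, Fintype (V t)]
    (hne : ∀ t, Nonempty (V t)) (hmono : Monotone fun t => Nat.card (V t))
    (hP : IsPlanar (completeMultipartiteGraph V)) :
    IsPlanarMultipartiteShape (completeMultipartiteGraph V) := by
  have hsum := sum_card_lt_three_of_isPlanar hP (I := {2}) (J := {0, 1}) (by decide)
  have hpos : ∀ t, 0 < Nat.card (V t) := fun t => Nat.card_pos_iff.mpr ⟨hne t, inferInstance⟩
  have h01 : Nat.card (V 0) ≤ Nat.card (V 1) := hmono (by decide)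
  have h12 : Nat.card (V 1) ≤ Nat.card (V 2) := hmono (by decide)
  rw [sum_singleton, sum_pair (by decide)] at hsum
  obtain ⟨e⟩ := nonempty_iso_KP3 V
  have h0pos := hpos 0
  by_cases h1 : Nat.card (V 1) = 1
  · rw [show Nat.card (V 0) = 1 by omega, h1] at e
    exact .inr <| .inr <| .inr <| .inr ⟨Nat.card (V 2), hpos 2, .inl ⟨e⟩⟩
  · rw [show Nat.card (V 1) = 2 by omega, show Nat.card (V 2) = 2 by omega] at e
    obtain h0 | h0 : Nat.card (V 0) = 2 ∨ Nat.card (V 0) = 1 := by omega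
    · rw [h0] at e
      exact .inr <| .inr <| .inl ⟨e⟩
    · rw [h0] at e
      exact .inr <| .inr <| .inr <| .inl ⟨e⟩

theorem isPlanarMultipartiteShape_of_fin_four {V : Fin 4 → Type} [∀ t, Fintype (V t)]
    (hne : ∀ t, Nonempty (V t)) (hmono : Monotone fun t => Nat.card (V t))
    (hP : IsPlanar (completeMultipartiteGraph V)) :
    IsPlanarMultipartiteShape (completeMultipartiteGraph V) := by
  have hsum₁ := sum_card_lt_three_of_isPlanar hP (I := {3}) (J := {0, 1, 2}) (by decide)
  have hsum₂ := sum_card_lt_three_of_isPlanar hP (I := {0, 2}) (J := {1, 3}) (by decide)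
  have hpos : ∀ t, 0 < Nat.card (V t) := fun t => Nat.card_pos_iff.mpr ⟨hne t, inferInstance⟩
  have h01 : Nat.card (V 0) ≤ Nat.card (V 1) := hmono (by decide)
  have h12 : Nat.card (V 1) ≤ Nat.card (V 2) := hmono (by decide)
  have h23 : Nat.card (V 2) ≤ Nat.card (V 3) := hmono (by decide)
  rw [sum_singleton, sum_insert (by decide), sum_pair (by decide)] at hsum₁
  rw [sum_pair (by decide), sum_pair (by decide)] at hsum₂
  have h0pos := hpos 0
  have h0 : Nat.card (V 0) = 1 := by omega
  have h1 : Nat.card (V 1) = 1 := by omega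
  have h2 : Nat.card (V 2) = 1 := by omega
  obtain h3 | h3 : Nat.card (V 3) = 2 ∨ Nat.card (V 3) = 1 := by omega
  · obtain ⟨e⟩ := nonempty_iso_KP4 V
    rw [h0, h1, h2, h3] at e
    exact .inl ⟨e⟩
  · refine .inr <| .inl <| nonempty_iso_completeGraph fun t => ?_
    fin_cases t <;> assumption

theorem isPlanarMultipartiteShape_of_isPlanar {k : ℕ} (hk : 2 ≤ k) {V : Fin k → Type}
    [∀ t, Fintype (V t)] (hne : ∀ t, Nonempty (V t))
    (hmono : Monotone fun t => Nat.card (V t)) (hP : IsPlanar (completeMultipartiteGraph V)) :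
    IsPlanarMultipartiteShape (completeMultipartiteGraph V) := by
  have hk4 := card_le_four_of_isPlanar hne hP
  rw [Fintype.card_fin] at hk4
  interval_cases k
  exacts [isPlanarMultipartiteShape_of_fin_two hne hmono hP,
    isPlanarMultipartiteShape_of_fin_three hne hmono hP,
    isPlanarMultipartiteShape_of_fin_four hne hmono hP]

end SimpleGraph.completeMultipartiteGraph

/-- A complete multipartite graph (with at least two parts, all nonempty) is
planar iff it is one of `K_{1,1,1,2}`, `K₄`, `K_{2,2,2}`, `K_{1,2,2}`,
`K_{1,1,n}`, `K_{2,n}`, `K_{1,n}` for some `n ≥ 1`. -/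
theorem completeMultipartite_planar_iff {ι : Type} [Fintype ι]
    (hι : 2 ≤ Fintype.card ι) (V : ι → Type) [∀ i, Fintype (V i)]
    (hne : ∀ i, Nonempty (V i)) :
    IsPlanar (completeMultipartiteGraph V) ↔
      (Nonempty (completeMultipartiteGraph V ≃g KP4 1 1 1 2) ∨
       Nonempty (completeMultipartiteGraph V ≃g completeGraph (Fin 4)) ∨
       Nonempty (completeMultipartiteGraph V ≃g KP3 2 2 2) ∨
       Nonempty (completeMultipartiteGraph V ≃g KP3 1 2 2) ∨
       ∃ n : ℕ, 1 ≤ n ∧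
         (Nonempty (completeMultipartiteGraph V ≃g KP3 1 1 n) ∨
          Nonempty (completeMultipartiteGraph V ≃g completeBipartiteGraph (Fin 2) (Fin n)) ∨
          Nonempty (completeMultipartiteGraph V ≃g completeBipartiteGraph (Fin 1) (Fin n)))) := by
  refine ⟨fun hP => ?_, IsPlanarMultipartiteShape.isPlanar⟩
  obtain ⟨e, he⟩ := exists_equiv_fin_monotone fun i => Nat.card (V i)
  let E := completeMultipartiteGraph.isoOfEquiv (V := V) e
  exact (completeMultipartiteGraph.isPlanarMultipartiteShape_of_isPlanar hι (fun t => hne (e t))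
    he (hP.of_isContained ⟨E.toCopy⟩)).of_iso E.symm
end

section
/- A planar complete multipartite graph in which every vertex has even degree and which has at least one edge is isomorphic to K_{2,2,2}, or to K_{2,2m} or K_{1,1,2m-1} for some positive integer m. -/
open SimpleGraph

/-!
Let `n i` be the size of part `i` and `N = ∑ i, n i`. Five nonempty parts contain a `K₅`, and
two disjoint groups of parts with at least three vertices each contain a `K₃,₃`; a vertex of
part `i` has degree `N - n i`, so all nonempty parts have the parity of `N`. With two to four
nonempty parts these constraints leave only the part sizes `(2, 2m)`, `(2, 2, 2)` and
`(1, 1, 2m - 1)`, and a complete multipartite graph is determined by its part sizes.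
-/

open Finset

lemma GraphMinor.of_isContained_s5 {W V : Type} {H : SimpleGraph W} {G : SimpleGraph V}
    (h : H ⊑ G) : GraphMinor H G := by
  obtain ⟨f⟩ := h
  refine ⟨fun w => {f w}, fun w => Set.singleton_nonempty _, fun w => ?_, fun w w' hne => ?_,
    fun w w' hadj => ⟨f w, rfl, f w', rfl, f.toHom.map_adj hadj⟩⟩
  · exact (G.induce {f w}).connected_iff.mpr
      ⟨fun u v => Subsingleton.elim u v ▸ .rfl, inferInstance⟩
  · exact Set.disjoint_singleton.mpr (f.injective.ne hne)

lemma Function.Embedding.nonempty_of_natCard_le {α β : Type} [Finite α] [Finite β]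
    (h : Nat.card α ≤ Nat.card β) : Nonempty (α ↪ β) := by
  have := Fintype.ofFinite α
  have := Fintype.ofFinite β
  exact Function.Embedding.nonempty_of_card_le (by simpa only [Nat.card_eq_fintype_card] using h)

section CompleteMultipartite

variable {ι : Type} (V : ι → Type)

lemma completeGraph_isContained_completeMultipartiteGraph [Fintype ι] {k : ℕ}
    (hk : k ≤ #{i | Nat.card (V i) ≠ 0}) :
    completeGraph (Fin k) ⊑ completeMultipartiteGraph V := by
  have hne (i : ι) (hi : i ∈ ({i | Nat.card (V i) ≠ 0} : Finset ι)) : Nonempty (V i) :=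
    (Nat.card_ne_zero.mp (mem_filter.mp hi).2).1
  let f (i : ({i | Nat.card (V i) ≠ 0} : Finset ι)) : Σ i, V i := ⟨i.1, (hne i.1 i.2).some⟩
  refine .trans (isContained_top_iff.mpr ?_) ⟨⟨⟨f, fun h => Subtype.val_injective.ne h⟩,
    fun _ _ h => Subtype.val_injective (congrArg Sigma.fst h)⟩⟩
  exact Function.Embedding.nonempty_of_natCard_le (by rwa [Nat.card_fin, Nat.card_eq_finsetCard])

variable [∀ i, Finite (V i)]

lemma natCard_subtype_fst_mem (s : Finset ι) :
    Nat.card {x : Σ i, V i // x.1 ∈ s} = ∑ i ∈ s, Nat.card (V i) := by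
  rw [Nat.card_congr (Equiv.subtypeSigmaEquiv V (· ∈ s)), Nat.card_sigma]
  exact Finset.sum_coe_sort s fun i => Nat.card (V i)

lemma completeBipartiteGraph_isContained_completeMultipartiteGraph {s t : Finset ι}
    (hst : Disjoint s t) {p q : ℕ} (hp : p ≤ ∑ i ∈ s, Nat.card (V i))
    (hq : q ≤ ∑ i ∈ t, Nat.card (V i)) :
    completeBipartiteGraph (Fin p) (Fin q) ⊑ completeMultipartiteGraph V := by
  have (u : Finset ι) : Finite {x : Σ i, V i // x.1 ∈ u} :=
    .of_equiv _ (Equiv.subtypeSigmaEquiv V (· ∈ u)).symm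
  obtain ⟨f⟩ : Nonempty (Fin p ↪ {x : Σ i, V i // x.1 ∈ s}) :=
    Function.Embedding.nonempty_of_natCard_le (by simpa [natCard_subtype_fst_mem] using hp)
  obtain ⟨g⟩ : Nonempty (Fin q ↪ {x : Σ i, V i // x.1 ∈ t}) :=
    Function.Embedding.nonempty_of_natCard_le (by simpa [natCard_subtype_fst_mem] using hq)
  have hfg (a : Fin p) (b : Fin q) : (f a).1.1 ≠ (g b).1.1 :=
    fun h => disjoint_left.mp hst (f a).2 (h ▸ (g b).2)
  refine ⟨⟨⟨Sum.elim (fun a => (f a).1) (fun b => (g b).1), ?_⟩, ?_⟩⟩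
  · rintro (a | b) (a' | b') h <;> simp at h
    exacts [hfg a b', (hfg a' b).symm]
  · exact (Subtype.val_injective.comp f.injective).sumElim (Subtype.val_injective.comp g.injective)
      fun a b h => hfg a b (congrArg Sigma.fst h)

lemma ncard_neighborSet_completeMultipartiteGraph [Fintype ι] (v : Σ i, V i) :
    ((completeMultipartiteGraph V).neighborSet v).ncard =
      ∑ i, Nat.card (V i) - Nat.card (V v.1) := by
  have : (completeMultipartiteGraph V).neighborSet v = (Set.range (Sigma.mk v.1))ᶜ := by
    ext ⟨i, x⟩
    simp [eq_comm]
  rw [this, Set.ncard_compl, Set.ncard_range_of_injective sigma_mk_injective, Nat.card_sigma]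

lemma nonempty_iso_comap_top_of_natCard_fiber {X : Type} [Finite X] (q : X → ι)
    (h : ∀ i, Nat.card (V i) = Nat.card {x // q x = i}) :
    Nonempty (completeMultipartiteGraph V ≃g (⊤ : SimpleGraph ι).comap q) := by
  let e := Equiv.ofFiberEquiv fun i => (Equiv.sigmaSubtype i).trans (Finite.card_eq.mp (h i)).some
  exact ⟨⟨e, fun {v w} => by simp only [comap_adj, top_adj, e, Equiv.ofFiberEquiv_map]⟩⟩

end CompleteMultipartite

lemma natCard_subtype_sumElim_eq {A B α : Type} [Finite A] [Finite B] (f : A → α) (g : B → α)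
    (i : α) :
    Nat.card {x // Sum.elim f g x = i} = Nat.card {a // f a = i} + Nat.card {b // g b = i} := by
  rw [Nat.card_congr Equiv.subtypeSum, Nat.card_sum]
  rfl

lemma natCard_subtype_const_eq {ι : Type} [DecidableEq ι] (p : ℕ) (a i : ι) :
    Nat.card {_x : Fin p // a = i} = (Pi.single a p : ι → ℕ) i := by
  by_cases h : a = i <;> simp [h]

section Labelled

variable {ι : Type}

lemma KP3_eq_comap_sumElim {a b c : ι} (hab : a ≠ b) (hac : a ≠ c) (hbc : b ≠ c)
    (p q r : ℕ) :
    KP3 p q r = (⊤ : SimpleGraph ι).comap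
      (Sum.elim (fun _ => a) (Sum.elim (fun _ => b) (fun _ => c))) := by
  ext (x | x | x) (y | y | y) <;> simp [KP3, hab, hac, hbc, hab.symm, hac.symm, hbc.symm]

lemma completeBipartiteGraph_eq_comap_sumElim {a b : ι} (hab : a ≠ b) (A B : Type) :
    completeBipartiteGraph A B =
      (⊤ : SimpleGraph ι).comap (Sum.elim (fun _ => a) (fun _ => b)) := by
  ext (x | x) (y | y) <;> simp [hab, hab.symm]

variable [DecidableEq ι] (V : ι → Type) [∀ i, Finite (V i)]

lemma nonempty_iso_KP3 {a b c : ι} (hab : a ≠ b) (hac : a ≠ c) (hbc : b ≠ c) {p q r : ℕ}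
    (hV : (Nat.card <| V ·) = Pi.single a p + Pi.single b q + Pi.single c r) :
    Nonempty (completeMultipartiteGraph V ≃g KP3 p q r) := by
  rw [KP3_eq_comap_sumElim hab hac hbc]
  refine nonempty_iso_comap_top_of_natCard_fiber V _ fun i => ?_
  simp only [congrFun hV i, natCard_subtype_sumElim_eq, natCard_subtype_const_eq, Pi.add_apply,
    add_assoc]

lemma nonempty_iso_completeBipartiteGraph {a b : ι} (hab : a ≠ b) {p q : ℕ}
    (hV : (Nat.card <| V ·) = Pi.single a p + Pi.single b q) :
    Nonempty (completeMultipartiteGraph V ≃g completeBipartiteGraph (Fin p) (Fin q)) := by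
  rw [completeBipartiteGraph_eq_comap_sumElim hab]
  refine nonempty_iso_comap_top_of_natCard_fiber V _ fun i => ?_
  simp only [congrFun hV i, natCard_subtype_sumElim_eq, natCard_subtype_const_eq, Pi.add_apply]

end Labelled

lemma eq_sum_single_and_ne_zero_of_filter_eq {ι : Type} [Fintype ι] [DecidableEq ι]
    {n : ι → ℕ} {T : Finset ι} (hT : ({i | n i ≠ 0} : Finset ι) = T) :
    n = ∑ i ∈ T, Pi.single i (n i) ∧ ∀ i ∈ T, n i ≠ 0 := by
  subst hT
  refine ⟨funext fun j => ?_, fun i hi => (mem_filter.mp hi).2⟩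
  rw [Finset.sum_apply, sum_pi_single]
  by_cases hj : n j = 0 <;> simp [hj]

/-- The constraints that planarity (no `K₅`, no `K₃,₃`) and even degrees put on the part sizes
of a complete multipartite graph. -/
structure PlanarEvenPartSizes {ι : Type} [Fintype ι] (n : ι → ℕ) : Prop where
  card_support_le : #{i | n i ≠ 0} ≤ 4
  sum_le_two_or_sum_le_two :
    ∀ s t : Finset ι, Disjoint s t → ∑ i ∈ s, n i ≤ 2 ∨ ∑ i ∈ t, n i ≤ 2
  even_sum_sub : ∀ i, n i ≠ 0 → Even (∑ j, n j - n i)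

namespace PlanarEvenPartSizes

variable {ι : Type} [Fintype ι] [DecidableEq ι] {n : ι → ℕ}

lemma of_card_support_eq_two (h : PlanarEvenPartSizes n) (hk : #{i | n i ≠ 0} = 2) :
    ∃ m, 1 ≤ m ∧ ∃ a b, a ≠ b ∧ n = Pi.single a 2 + Pi.single b (2 * m) := by
  obtain ⟨a, b, hab, hT⟩ := card_eq_two.mp hk
  obtain ⟨hn, hpos⟩ := eq_sum_single_and_ne_zero_of_filter_eq hT
  have hN : ∑ i, n i = n a + n b := by rw [← sum_filter_ne_zero, hT, sum_pair hab]
  rw [sum_pair hab] at hn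
  obtain ⟨ha0, hb0⟩ : n a ≠ 0 ∧ n b ≠ 0 := by simpa using hpos
  have hea := h.even_sum_sub a ha0
  have heb := h.even_sum_sub b hb0
  have hs := h.sum_le_two_or_sum_le_two {a} {b} (disjoint_singleton.mpr hab)
  rw [hN, Nat.even_iff] at hea heb
  rw [sum_singleton, sum_singleton] at hs
  rcases hs with ha | hb
  · refine ⟨n b / 2, by omega, a, b, hab, hn.trans ?_⟩
    rw [show n a = 2 by omega, show 2 * (n b / 2) = n b by omega]
  · refine ⟨n a / 2, by omega, b, a, hab.symm, hn.trans ?_⟩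
    rw [add_comm, show n b = 2 by omega, show 2 * (n a / 2) = n a by omega]

lemma of_card_support_eq_three (h : PlanarEvenPartSizes n) (hk : #{i | n i ≠ 0} = 3) :
    (∃ a b c, a ≠ b ∧ a ≠ c ∧ b ≠ c ∧
      n = Pi.single a 2 + Pi.single b 2 + Pi.single c 2) ∨
    ∃ m, 1 ≤ m ∧ ∃ a b c, a ≠ b ∧ a ≠ c ∧ b ≠ c ∧
      n = Pi.single a 1 + Pi.single b 1 + Pi.single c (2 * m - 1) := by
  obtain ⟨a, b, c, hab, hac, hbc, hT⟩ := card_eq_three.mp hk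
  obtain ⟨hn, hpos⟩ := eq_sum_single_and_ne_zero_of_filter_eq hT
  have ha_bc : a ∉ ({b, c} : Finset ι) := by simp [hab, hac]
  have hN : ∑ i, n i = n a + n b + n c := by
    rw [← sum_filter_ne_zero, hT, sum_insert ha_bc, sum_pair hbc, add_assoc]
  rw [sum_insert ha_bc, sum_pair hbc, ← add_assoc] at hn
  obtain ⟨ha0, hb0, hc0⟩ : n a ≠ 0 ∧ n b ≠ 0 ∧ n c ≠ 0 := by simpa using hpos
  have hea := h.even_sum_sub a ha0
  have heb := h.even_sum_sub b hb0
  have hec := h.even_sum_sub c hc0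
  have hsa := h.sum_le_two_or_sum_le_two {a} {b, c} (by simp [hab, hac])
  have hsb := h.sum_le_two_or_sum_le_two {b} {a, c} (by simp [hab.symm, hbc])
  have hsc := h.sum_le_two_or_sum_le_two {c} {a, b} (by simp [hac.symm, hbc.symm])
  rw [hN, Nat.even_iff] at hea heb hec
  simp only [sum_singleton, sum_pair hab, sum_pair hac, sum_pair hbc] at hsa hsb hsc
  -- a part of size at least 3 leaves one vertex to each other part; otherwise parity decides
  have hsizes : n a = 2 ∧ n b = 2 ∧ n c = 2 ∨ n a = 1 ∧ n b = 1 ∨ n a = 1 ∧ n c = 1 ∨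
      n b = 1 ∧ n c = 1 := by
    omega
  rcases hsizes with ⟨ha, hb, hc⟩ | ⟨ha, hb⟩ | ⟨ha, hc⟩ | ⟨hb, hc⟩
  · exact Or.inl ⟨a, b, c, hab, hac, hbc, by rwa [ha, hb, hc] at hn⟩
  · refine Or.inr ⟨(n c + 1) / 2, by omega, a, b, c, hab, hac, hbc, hn.trans ?_⟩
    rw [ha, hb, show 2 * ((n c + 1) / 2) - 1 = n c by omega]
  · refine Or.inr ⟨(n b + 1) / 2, by omega, a, c, b, hac, hab, hbc.symm, hn.trans ?_⟩
    rw [ha, hc, show 2 * ((n b + 1) / 2) - 1 = n b by omega, add_right_comm]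
  · refine Or.inr ⟨(n a + 1) / 2, by omega, b, c, a, hbc, hab.symm, hac.symm, hn.trans ?_⟩
    rw [hb, hc, show 2 * ((n a + 1) / 2) - 1 = n a by omega]
    ac_rfl

lemma card_support_ne_four (h : PlanarEvenPartSizes n) : #{i | n i ≠ 0} ≠ 4 := by
  intro hk
  obtain ⟨a, b, c, d, hab, hac, had, hbc, hbd, hcd, hT⟩ := card_eq_four.mp hk
  obtain ⟨-, hpos⟩ := eq_sum_single_and_ne_zero_of_filter_eq hT
  have hN : ∑ i, n i = n a + n b + (n c + n d) := by
    rw [← sum_filter_ne_zero, hT, sum_insert (by simp [hab, hac, had]),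
      sum_insert (by simp [hbc, hbd]), sum_pair hcd, add_assoc]
  obtain ⟨ha0, hb0, hc0, hd0⟩ : n a ≠ 0 ∧ n b ≠ 0 ∧ n c ≠ 0 ∧ n d ≠ 0 := by
    simpa using hpos
  have hea := h.even_sum_sub a ha0
  have heb := h.even_sum_sub b hb0
  have hec := h.even_sum_sub c hc0
  have hed := h.even_sum_sub d hd0
  have hs := h.sum_le_two_or_sum_le_two {a, b} {c, d}
    (by simp [hac.symm, had.symm, hbc.symm, hbd.symm])
  rw [hN, Nat.even_iff] at hea heb hec hed
  rw [sum_pair hab, sum_pair hcd] at hs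
  -- four sizes of the parity of `N` sum to `N`, so all are even, hence at least 2
  omega

theorem classification (h : PlanarEvenPartSizes n) (htwo : 2 ≤ #{i | n i ≠ 0}) :
    (∃ a b c, a ≠ b ∧ a ≠ c ∧ b ≠ c ∧
      n = Pi.single a 2 + Pi.single b 2 + Pi.single c 2) ∨
    ∃ m, 1 ≤ m ∧
      ((∃ a b, a ≠ b ∧ n = Pi.single a 2 + Pi.single b (2 * m)) ∨
        ∃ a b c, a ≠ b ∧ a ≠ c ∧ b ≠ c ∧
          n = Pi.single a 1 + Pi.single b 1 + Pi.single c (2 * m - 1)) := by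
  have := h.card_support_le
  have := h.card_support_ne_four
  obtain hk | hk : #{i | n i ≠ 0} = 2 ∨ #{i | n i ≠ 0} = 3 := by omega
  · obtain ⟨m, hm, hn⟩ := h.of_card_support_eq_two hk
    exact Or.inr ⟨m, hm, Or.inl hn⟩
  · obtain hn | ⟨m, hm, hn⟩ := h.of_card_support_eq_three hk
    exacts [Or.inl hn, Or.inr ⟨m, hm, Or.inr hn⟩]

end PlanarEvenPartSizes

lemma IsPlanar.planarEvenPartSizes {ι : Type} [Fintype ι] {V : ι → Type} [∀ i, Finite (V i)]
    (hpl : IsPlanar (completeMultipartiteGraph V))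
    (heven : ∀ v, Even (((completeMultipartiteGraph V).neighborSet v).ncard)) :
    PlanarEvenPartSizes (Nat.card <| V ·) where
  card_support_le := by
    by_contra! h5
    exact hpl.1 (.of_isContained (completeGraph_isContained_completeMultipartiteGraph V h5))
  sum_le_two_or_sum_le_two s t hst := by
    by_contra! h3
    exact hpl.2 (.of_isContained
      (completeBipartiteGraph_isContained_completeMultipartiteGraph V hst h3.1 h3.2))
  even_sum_sub i hi := by
    obtain ⟨x⟩ := (Nat.card_ne_zero.mp hi).1
    simpa [ncard_neighborSet_completeMultipartiteGraph] using heven ⟨i, x⟩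

/-- A planar complete multipartite graph in which every vertex has even degree
and which has at least one edge is `K_{2,2,2}`, or `K_{2,2m}` or `K_{1,1,2m-1}`
for some positive integer `m`. -/
theorem completeMultipartite_planar_even {ι : Type} [Fintype ι]
    (V : ι → Type) [∀ i, Fintype (V i)]
    (hpl : IsPlanar (completeMultipartiteGraph V))
    (heven : ∀ v, Even (((completeMultipartiteGraph V).neighborSet v).ncard))
    (hedge : ∃ v w, (completeMultipartiteGraph V).Adj v w) :
    Nonempty (completeMultipartiteGraph V ≃g KP3 2 2 2) ∨
      ∃ m : ℕ, 1 ≤ m ∧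
        (Nonempty (completeMultipartiteGraph V ≃g completeBipartiteGraph (Fin 2) (Fin (2 * m))) ∨
         Nonempty (completeMultipartiteGraph V ≃g KP3 1 1 (2 * m - 1))) := by
  classical
  obtain ⟨v, w, hvw⟩ := hedge
  have hpart (u : Σ i, V i) : u.1 ∈ ({i | Nat.card (V i) ≠ 0} : Finset ι) :=
    mem_filter.mpr ⟨mem_univ _, Nat.card_ne_zero.mpr ⟨⟨u.2⟩, inferInstance⟩⟩
  have htwo : 2 ≤ #{i | Nat.card (V i) ≠ 0} := one_lt_card.mpr ⟨v.1, hpart v, w.1, hpart w, hvw⟩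
  rcases (hpl.planarEvenPartSizes heven).classification htwo with
    ⟨a, b, c, hab, hac, hbc, hV⟩ | ⟨m, hm, ⟨a, b, hab, hV⟩ | ⟨a, b, c, hab, hac, hbc, hV⟩⟩
  · exact Or.inl (nonempty_iso_KP3 V hab hac hbc hV)
  · exact Or.inr ⟨m, hm, Or.inl (nonempty_iso_completeBipartiteGraph V hab hV)⟩
  · exact Or.inr ⟨m, hm, Or.inr (nonempty_iso_KP3 V hab hac hbc hV)⟩
end

section
/- The dual of a 3-connected 3-regular bipartite planar graph embedded on the sphere contains no subgraph isomorphic to K_4. -/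
open SimpleGraph

/-- The setoid on `α` whose classes are the cycles (orbits) of a permutation. -/
def cycleSetoid {α : Type} (f : Equiv.Perm α) : Setoid α :=
  ⟨f.SameCycle, ⟨fun x => Equiv.Perm.SameCycle.refl f x,
    fun h => h.symm, fun h h' => h.trans h'⟩⟩

/-- The dart-reversal involution as a permutation of the darts of `G`. -/
def dartFlip {V : Type} (G : SimpleGraph V) : Equiv.Perm G.Dart :=
  ⟨SimpleGraph.Dart.symm, SimpleGraph.Dart.symm,
    fun d => SimpleGraph.Dart.symm_symm d, fun d => SimpleGraph.Dart.symm_symm d⟩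

/-- A combinatorial embedding of `G` on the sphere: a rotation system (a
permutation of the darts whose cycles are exactly the stars of the vertices)
satisfying Euler's formula `|V| - |E| + |F| = 2`, where the faces are the
cycles of the face permutation `ρ ∘ flip`. -/
structure SphereEmbedding {V : Type} (G : SimpleGraph V) where
  ρ : Equiv.Perm G.Dart
  fst_fix : ∀ d : G.Dart, (ρ d).toProd.1 = d.toProd.1
  vertex_cycle : ∀ d d' : G.Dart, d.toProd.1 = d'.toProd.1 → ρ.SameCycle d d'
  euler : Nat.card V + Nat.card (Quotient (cycleSetoid (ρ * dartFlip G)))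
            = Nat.card G.edgeSet + 2

/-- The face permutation of an embedding. -/
def facePerm {V : Type} {G : SimpleGraph V} (e : SphereEmbedding G) :
    Equiv.Perm G.Dart :=
  e.ρ * dartFlip G

/-- The faces of an embedding: the cycles of the face permutation. -/
def Faces {V : Type} {G : SimpleGraph V} (e : SphereEmbedding G) : Type :=
  Quotient (cycleSetoid (facePerm e))

/-- The face containing a given dart. -/
def faceOf {V : Type} {G : SimpleGraph V} (e : SphereEmbedding G) (d : G.Dart) :
    Faces e :=
  Quotient.mk (cycleSetoid (facePerm e)) d

/-- The dual graph of an embedded graph: vertices are the faces, two distinct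
faces being adjacent when they share an edge. -/
def dualGraph {V : Type} {G : SimpleGraph V} (e : SphereEmbedding G) :
    SimpleGraph (Faces e) :=
  SimpleGraph.fromRel (fun F F' => ∃ d : G.Dart, faceOf e d = F ∧ faceOf e d.symm = F')

/-- `G` is 3-connected: at least 4 vertices, and removing any at most 2
vertices leaves a connected graph. -/
def ThreeConnected {V : Type} (G : SimpleGraph V) : Prop :=
  4 ≤ Nat.card V ∧ ∀ s : Set V, s.ncard ≤ 2 → (G.induce sᶜ).Connected

/-!
Give every dart leaving a vertex of colour `0` the value `1` and every other dart the value `-1`.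
As every vertex has degree 3, this is a nowhere-zero `ZMod 3`-flow on `G`. On the sphere every flow
is the coboundary of a potential on the faces: face coboundaries are flows, the coboundary maps of
vertices and of faces of the connected graph `G` both have one-dimensional kernels, and Euler's
formula then forces the space of flows to be exactly the space of face coboundaries. A potential
whose coboundary vanishes nowhere is a proper colouring of the dual graph by the three elements of
`ZMod 3`, so the dual has no 4-clique.
-/

open Finset Module LinearMap Matrix

-- Classical, so that it applies to faces, whose equality is not decidable.
open scoped Classical in
noncomputable def signedIncMatrix (K : Type*) [Ring K] {ι X : Type*} (p : ι → X × X) :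
    Matrix ι X K :=
  Matrix.of fun i => Pi.single (p i).1 1 - Pi.single (p i).2 1

theorem signedIncMatrix_mulVec {K ι X : Type*} [Ring K] [Fintype X] (p : ι → X × X) (a : X → K)
    (i : ι) : (signedIncMatrix K p *ᵥ a) i = a (p i).1 - a (p i).2 := by
  classical
  change (Pi.single (p i).1 1 - Pi.single (p i).2 1) ⬝ᵥ a = _
  rw [sub_dotProduct, single_dotProduct, single_dotProduct, one_mul, one_mul]

theorem finrank_ker_le_one_of_forall_eq {K X M : Type*} [Field K] [AddCommGroup M] [Module K M]
    (f : (X → K) →ₗ[K] M) (hf : ∀ a ∈ ker f, ∀ x y, a x = a y) : finrank K (ker f) ≤ 1 := by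
  have hle : ker f ≤ K ∙ (fun _ => (1 : K)) := by
    intro a ha
    rw [Submodule.mem_span_singleton]
    rcases isEmpty_or_nonempty X with hX | ⟨⟨x₀⟩⟩
    · exact ⟨0, Subsingleton.elim _ _⟩
    · exact ⟨a x₀, funext fun x => by simp [hf a ha x₀ x]⟩
  calc finrank K (ker f) ≤ finrank K (K ∙ fun _ => (1 : K)) := Submodule.finrank_mono hle
    _ ≤ 1 := by simpa using finrank_span_le_card ({fun _ => (1 : K)} : Set (X → K))

theorem Matrix.ker_transpose_mulVecLin_eq_range {K ι X Y : Type*} [Field K] [Fintype ι]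
    [Fintype X] [Fintype Y] (A : Matrix ι X K) (B : Matrix ι Y K) (hAB : Aᵀ * B = 0)
    (hA : finrank K (ker A.mulVecLin) ≤ 1) (hB : finrank K (ker B.mulVecLin) ≤ 1)
    (hcard : Fintype.card ι + 2 ≤ Fintype.card X + Fintype.card Y) :
    ker Aᵀ.mulVecLin = range B.mulVecLin := by
  have hle : range B.mulVecLin ≤ ker Aᵀ.mulVecLin := by
    rintro _ ⟨c, rfl⟩
    rw [LinearMap.mem_ker, mulVecLin_apply, mulVecLin_apply, mulVec_mulVec, hAB, zero_mulVec]
  refine (Submodule.eq_of_le_of_finrank_le hle ?_).symm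
  have hB' := B.mulVecLin.finrank_range_add_finrank_ker
  have hA' := A.mulVecLin.finrank_range_add_finrank_ker
  have hAt := Aᵀ.mulVecLin.finrank_range_add_finrank_ker
  have hrank := A.rank_transpose
  simp only [Module.finrank_fintype_fun_eq_card, Matrix.rank] at *
  omega

namespace SimpleGraph

variable {V : Type*} {G : SimpleGraph V}

theorem Connected.apply_eq_of_forall_adj {β : Type*} (hG : G.Connected) {f : V → β}
    (hf : ∀ u v, G.Adj u v → f u = f v) (u v : V) : f u = f v := by
  obtain ⟨p⟩ := hG.preconnected u v
  induction p with
  | nil => rfl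
  | cons h _ ih => exact (hf _ _ h).trans ih

theorem IsClique.ncard_le_of_coloring {α : Type*} [Finite α] (C : G.Coloring α) {s : Set V}
    (hs : G.IsClique s) : s.ncard ≤ Nat.card α := by
  have hinj : Set.InjOn C s := fun x hx y hy hxy => by
    by_contra hne
    exact C.valid (hs hx hy hne) hxy
  exact hinj.ncard_image ▸ Set.ncard_le_card _

theorem exists_orientation : ∃ o : G.edgeSet → G.Dart, ∀ ed, (o ed).edge = ed := by
  have : ∀ ed : G.edgeSet, ∃ d : G.Dart, d.edge = ed := fun ⟨ed, hed⟩ => by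
    induction ed using Sym2.ind with
    | _ u v => exact ⟨⟨(u, v), hed⟩, rfl⟩
  choose o ho using this
  exact ⟨o, ho⟩

section Orientation

variable (o : G.edgeSet → G.Dart) (ho : ∀ ed, (o ed).edge = ed)
include ho

theorem eq_or_eq_symm_of_edge (d : G.Dart) :
    d = o ⟨d.edge, d.edge_mem⟩ ∨ d = (o ⟨d.edge, d.edge_mem⟩).symm :=
  (dart_edge_eq_iff _ _).1 (ho ⟨d.edge, d.edge_mem⟩).symm

theorem eq_of_forall_orientation_eq {M : Type*} [SubtractionMonoid M] {g g' : G.Dart → M}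
    (hg : ∀ d, g d.symm = -g d) (hg' : ∀ d, g' d.symm = -g' d)
    (h : ∀ ed, g (o ed) = g' (o ed)) : g = g' := by
  funext d
  rcases eq_or_eq_symm_of_edge o ho d with hd | hd <;> rw [hd]
  · exact h _
  · rw [hg, hg', h]

theorem Connected.finrank_ker_signedIncMatrix_le_one {K : Type*} [Field K] [Fintype V]
    (hG : G.Connected) :
    finrank K (ker (signedIncMatrix K fun ed => (o ed).toProd).mulVecLin) ≤ 1 := by
  refine finrank_ker_le_one_of_forall_eq _ fun a ha => hG.apply_eq_of_forall_adj fun u v huv => ?_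
  have hzero := eq_of_forall_orientation_eq o ho (g := fun d => a d.fst - a d.snd) (g' := 0)
    (fun d => by simp) (fun d => by simp)
    (fun ed => by simpa [signedIncMatrix_mulVec] using congrFun ha ed)
  exact sub_eq_zero.1 (congrFun hzero ⟨(u, v), huv⟩)

variable [Fintype V] [DecidableEq V] [DecidableRel G.Adj]

theorem sum_dart_eq_sum_edgeSet {M : Type*} [AddCommMonoid M] (f : G.Dart → M) :
    ∑ d, f d = ∑ ed : G.edgeSet, (f (o ed) + f (o ed).symm) := by
  rw [← Finset.sum_fiberwise univ (fun d => (⟨d.edge, d.edge_mem⟩ : G.edgeSet)) f]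
  refine Finset.sum_congr rfl fun ed _ => ?_
  have hfiber : ({d | (⟨d.edge, d.edge_mem⟩ : G.edgeSet) = ed} : Finset G.Dart)
      = {o ed, (o ed).symm} := by
    rw [← (o ed).edge_fiber]
    ext d
    simp [Subtype.ext_iff, ho]
  rw [hfiber, Finset.sum_pair (o ed).symm_ne.symm]

end Orientation

variable [Fintype V] [DecidableEq V] [DecidableRel G.Adj]

structure IsFlow {K : Type*} [AddCommGroup K] (h : G.Dart → K) : Prop where
  map_symm : ∀ d, h d.symm = -h d
  sum_fst_eq_zero : ∀ v, ∑ d with d.fst = v, h d = 0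

theorem IsFlow.transpose_signedIncMatrix_mulVec_eq_zero {K : Type*} [Ring K] {h : G.Dart → K}
    (hh : G.IsFlow h) (o : G.edgeSet → G.Dart) (ho : ∀ ed, (o ed).edge = ed) :
    (signedIncMatrix K fun ed => (o ed).toProd)ᵀ *ᵥ (h ∘ o) = 0 := by
  funext v
  rw [Pi.zero_apply, ← hh.sum_fst_eq_zero v, Finset.sum_filter, sum_dart_eq_sum_edgeSet o ho]
  simp only [mulVec, dotProduct, transpose_apply, signedIncMatrix, of_apply, Pi.sub_apply,
    Pi.single_apply]
  refine Finset.sum_congr rfl fun ed _ => ?_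
  simp only [Function.comp_apply, Dart.symm_toProd, Prod.fst_swap, hh.map_symm, @eq_comm _ v]
  split_ifs <;> noncomm_ring

theorem Colorable.exists_isFlow_forall_ne_zero {K : Type*} [Ring K] [Nontrivial K]
    (hbip : G.Colorable 2) (hdeg : ∀ v, (G.degree v : K) = 0) :
    ∃ h : G.Dart → K, G.IsFlow h ∧ ∀ d, h d ≠ 0 := by
  obtain ⟨C⟩ := hbip
  refine ⟨fun d => if C d.fst = 0 then 1 else -1, ⟨fun d => ?_, fun v => ?_⟩, fun d => ?_⟩
  · have hne : C d.snd ≠ C d.fst := (C.valid d.adj).symm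
    simp only [Dart.symm_toProd, Prod.fst_swap]
    generalize C d.snd = a, C d.fst = b at hne
    fin_cases a <;> fin_cases b <;> simp_all
  · rw [Finset.sum_congr rfl fun d hd => by rw [(Finset.mem_filter.1 hd).2], Finset.sum_const,
      dart_fst_fiber_card_eq_degree, nsmul_eq_mul, hdeg, zero_mul]
  · dsimp only
    split_ifs <;> simp

end SimpleGraph

namespace SphereEmbedding

variable {V : Type} {G : SimpleGraph V} (e : SphereEmbedding G)

theorem faceOf_symm (d : G.Dart) : faceOf e d.symm = faceOf e (e.ρ d) :=
  Quotient.sound ⟨1, rfl⟩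

theorem faceOf_surjective : Function.Surjective (faceOf e) :=
  Quotient.mk_surjective

def dualColoring {α : Type*} (c : Faces e → α) (hc : ∀ d, c (faceOf e d.symm) ≠ c (faceOf e d)) :
    (dualGraph e).Coloring α :=
  Coloring.mk c fun {F F'} hadj => by
    obtain ⟨-, ⟨d, rfl, rfl⟩ | ⟨d, rfl, rfl⟩⟩ := hadj
    · exact (hc d).symm
    · exact hc d

theorem apply_eq_of_forall_invariant [Finite G.Dart] (hG : G.Connected) {β : Type*}
    {f : G.Dart → β} (hρ : ∀ d, f (e.ρ d) = f d) (hsymm : ∀ d, f d.symm = f d)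
    (d d' : G.Dart) : f d = f d' := by
  have hstar : ∀ d₁ d₂ : G.Dart, d₁.fst = d₂.fst → f d₁ = f d₂ := by
    intro d₁ d₂ h
    obtain ⟨n, -, rfl⟩ := (e.vertex_cycle d₁ d₂ h).exists_pow_eq'
    rw [Equiv.Perm.coe_pow, ← Function.comp_apply (f := f),
      Function.iterate_invariant (funext hρ)]
  suffices ∀ u v (p : G.Walk u v) (d₁ d₂ : G.Dart), d₁.fst = u → d₂.fst = v → f d₁ = f d₂ from
    this _ _ (hG.preconnected d.fst d'.fst).some d d' rfl rfl
  intro u v p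
  induction p with
  | nil => exact fun d₁ d₂ h₁ h₂ => hstar _ _ (h₁.trans h₂.symm)
  | @cons u w _ hadj _ ih =>
    intro d₁ d₂ h₁ h₂
    calc f d₁ = f ⟨(u, w), hadj⟩ := hstar _ _ h₁
      _ = f (Dart.symm ⟨(u, w), hadj⟩) := (hsymm _).symm
      _ = f d₂ := ih _ _ rfl h₂

variable [Fintype V] [DecidableEq V] [DecidableRel G.Adj]

noncomputable instance : Fintype (Faces e) :=
  have : Finite (Faces e) := Quotient.finite _
  Fintype.ofFinite _

theorem isFlow_sub_faceOf {K : Type*} [AddCommGroup K] (c : Faces e → K) :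
    G.IsFlow fun d => c (faceOf e d.symm) - c (faceOf e d) where
  map_symm d := by simp
  sum_fst_eq_zero v := by
    rw [Finset.sum_sub_distrib, sub_eq_zero, Finset.sum_filter, Finset.sum_filter,
      ← Equiv.sum_comp e.ρ fun d => if d.fst = v then c (faceOf e d) else 0]
    simp only [faceOf_symm, e.fst_fix]

section Orientation

variable {K : Type*} [Field K] (o : G.edgeSet → G.Dart) (ho : ∀ ed, (o ed).edge = ed)
include ho

theorem finrank_ker_signedIncMatrix_faceOf_le_one (hG : G.Connected) :
    finrank K (ker (signedIncMatrix K fun ed => (faceOf e (o ed).symm, faceOf e (o ed))).mulVecLin)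
      ≤ 1 := by
  refine finrank_ker_le_one_of_forall_eq _ fun c hc F F' => ?_
  have hsymm := eq_of_forall_orientation_eq o ho (g := fun d => c (faceOf e d.symm) - c (faceOf e d))
    (g' := 0) (isFlow_sub_faceOf e c).map_symm (by simp)
    (fun ed => by simpa [signedIncMatrix_mulVec] using congrFun hc ed)
  obtain ⟨d, rfl⟩ := e.faceOf_surjective F
  obtain ⟨d', rfl⟩ := e.faceOf_surjective F'
  refine e.apply_eq_of_forall_invariant hG (f := fun d => c (faceOf e d)) (fun d => ?_)
    (fun d => sub_eq_zero.1 (congrFun hsymm d)) d d'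
  rw [← faceOf_symm]
  exact sub_eq_zero.1 (congrFun hsymm d)

theorem transpose_mul_signedIncMatrix_faceOf_eq_zero :
    (signedIncMatrix K fun ed => (o ed).toProd)ᵀ *
      signedIncMatrix K (fun ed => (faceOf e (o ed).symm, faceOf e (o ed))) = 0 := by
  refine ext_iff_mulVec.2 fun c => ?_
  have hc : signedIncMatrix K (fun ed => (faceOf e (o ed).symm, faceOf e (o ed))) *ᵥ c
      = (fun d => c (faceOf e d.symm) - c (faceOf e d)) ∘ o :=
    funext fun ed => signedIncMatrix_mulVec _ _ _
  rw [← mulVec_mulVec, zero_mulVec, hc]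
  exact (isFlow_sub_faceOf e c).transpose_signedIncMatrix_mulVec_eq_zero o ho

end Orientation

theorem exists_potential_of_isFlow {K : Type*} [Field K] (hG : G.Connected) {h : G.Dart → K}
    (hh : G.IsFlow h) : ∃ c : Faces e → K, ∀ d, c (faceOf e d.symm) - c (faceOf e d) = h d := by
  obtain ⟨o, ho⟩ := G.exists_orientation
  have hcard : Fintype.card G.edgeSet + 2 ≤ Fintype.card V + Fintype.card (Faces e) := by
    have heuler : Nat.card V + Nat.card (Faces e) = Nat.card G.edgeSet + 2 := e.euler
    simp only [Nat.card_eq_fintype_card] at heuler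
    omega
  have hflow := hh.transpose_signedIncMatrix_mulVec_eq_zero o ho
  rw [← mulVecLin_apply, ← LinearMap.mem_ker, Matrix.ker_transpose_mulVecLin_eq_range _ _
    (e.transpose_mul_signedIncMatrix_faceOf_eq_zero o ho)
    (hG.finrank_ker_signedIncMatrix_le_one o ho)
    (e.finrank_ker_signedIncMatrix_faceOf_le_one o ho hG) hcard] at hflow
  obtain ⟨c, hc⟩ := hflow
  refine ⟨c, congrFun (eq_of_forall_orientation_eq o ho (isFlow_sub_faceOf e c).map_symm
    hh.map_symm fun ed => ?_)⟩
  rw [← signedIncMatrix_mulVec (K := K) (fun ed => (faceOf e (o ed).symm, faceOf e (o ed)))]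
  exact congrFun hc ed

end SphereEmbedding

/-- The dual of a 3-connected 3-regular bipartite planar graph embedded on the
sphere contains no subgraph isomorphic to `K₄`, i.e. no 4-clique of faces. -/
theorem dual_of_cubic_bipartite_K4_free {V : Type} [Fintype V]
    (G : SimpleGraph V) (h3 : ThreeConnected G)
    (hcubic : ∀ v : V, (G.neighborSet v).ncard = 3)
    (hbip : G.Colorable 2) (e : SphereEmbedding G) :
    ¬ ∃ s : Set (Faces e), (dualGraph e).IsClique s ∧ s.ncard = 4 := by
  classical
  have hG : G.Connected := by
    have hconn := h3.2 ∅ (by simp)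
    rwa [Set.compl_empty, (induceUnivIso G).connected_iff] at hconn
  have hdeg : ∀ v, (G.degree v : ZMod 3) = 0 := fun v => by
    rw [← card_neighborSet_eq_degree, ← Nat.card_eq_fintype_card, Nat.card_coe_set_eq, hcubic v]
    rfl
  obtain ⟨h, hh, hh₀⟩ := hbip.exists_isFlow_forall_ne_zero hdeg
  obtain ⟨c, hc⟩ := e.exists_potential_of_isFlow hG hh
  rintro ⟨s, hs, hcard⟩
  have := hs.ncard_le_of_coloring (e.dualColoring c fun d => sub_ne_zero.1 (hc d ▸ hh₀ d))
  rw [Nat.card_zmod] at this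
  omega
end

section
/- If G is a 3-connected 3-regular planar graph and G' is obtained from G by truncating a vertex v (replacing v by a triangle v_1 v_2 v_3, with v_i joined to the i-th former neighbor u_i of v), then G' is also 3-connected, 3-regular and planar, and |V(G')| = |V(G)| + 2. -/
open SimpleGraph

/-- The truncation of a vertex `v` (with neighbors `u 0, u 1, u 2`) in a cubic
graph: delete `v` and add a triangle `v₁ v₂ v₃`, joining `vᵢ` to `u i`. -/
def truncateVertex {V : Type} (G : SimpleGraph V) (v : V) (u : Fin 3 → V) :
    SimpleGraph ({w : V // w ≠ v} ⊕ Fin 3) :=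
  SimpleGraph.fromRel (fun a b =>
    match a, b with
    | Sum.inl w, Sum.inl w' => G.Adj w.1 w'.1
    | Sum.inl w, Sum.inr i => w.1 = u i
    | Sum.inr _, Sum.inl _ => False
    | Sum.inr i, Sum.inr j => i ≠ j)


/-!
Degrees and the vertex count are local computations. For 3-connectivity, a set `S` of at most
two vertices of the truncation `G'` collapses (triangle ↦ `v`) to at most two vertices of `G`;
walks of `G` avoiding them lift to `G' - S` because the triangle is a clique, and a surviving
triangle vertex reaches the rest through one of the three disjoint pairs `{vₘ, u m}` that `S`
misses.

For planarity, take a `K₅` or `K₃,₃` model in `G'`. A branch set that contains at most one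
triangle vertex `vᵢ`, and then also `u i`, stays connected and keeps its adjacencies after
`vᵢ` is deleted; one further branch set may keep all its triangle vertices, which collapse to
`v`. A branch set `{v_c}` would need `≥ 3` neighbouring branch sets, attached at the three
neighbours of `v_c`; counting these shows that such a choice exists unless the triangle
vertices lie in three pairwise adjacent branch sets. `K₃,₃` has no triangle, and in `K₅` these
three sets, together with `{v}` and the two remaining branch sets, form a `K₃,₃` model in `G`.
-/

open Function

section General
variable {α β : Type*} {A : SimpleGraph α} {B : SimpleGraph β}

lemma SimpleGraph.Preconnected.of_map_reachable (hA : A.Preconnected) (q : α → β)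
    (hq : ∀ a b, A.Adj a b → B.Reachable (q a) (q b))
    (hsurj : ∀ y, ∃ x, B.Reachable (q x) y) : B.Preconnected := by
  have hreach (a b : α) : B.Reachable (q a) (q b) := by
    rw [reachable_iff_reflTransGen]
    exact Relation.ReflTransGen.lift' q (fun a b h => (reachable_iff_reflTransGen _ _).1 (hq a b h))
      a b ((reachable_iff_reflTransGen a b).1 (hA a b))
  intro y y'
  obtain ⟨x, hx⟩ := hsurj y
  obtain ⟨x', hx'⟩ := hsurj y'
  exact hx.symm.trans ((hreach x x').trans hx')

lemma SimpleGraph.Connected.induce_image {s : Set α} (hs : (A.induce s).Connected) (q : α → β)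
    (hq : ∀ a ∈ s, ∀ b ∈ s, A.Adj a b → B.Adj (q a) (q b) ∨ q a = q b) :
    (B.induce (q '' s)).Connected := by
  obtain ⟨⟨a, ha⟩⟩ := hs.nonempty
  have : Nonempty (q '' s) := ⟨⟨q a, a, ha, rfl⟩⟩
  refine ⟨hs.preconnected.of_map_reachable (fun a => ⟨q a, a, a.2, rfl⟩) ?_ ?_⟩
  · intro a b hab
    rcases hq a a.2 b b.2 hab with h | h
    · exact Adj.reachable (by simpa using h)
    · exact (Subtype.ext h : (⟨q a, a, a.2, rfl⟩ : q '' s) = ⟨q b, b, b.2, rfl⟩) ▸ Reachable.refl _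
  · rintro ⟨_, a, ha, rfl⟩
    exact ⟨⟨a, ha⟩, Reachable.refl _⟩

lemma SimpleGraph.Connected.exists_adj_of_mem {s : Set α} (hs : (A.induce s).Connected) {x y : α}
    (hx : x ∈ s) (hy : y ∈ s) (hxy : x ≠ y) : ∃ z ∈ s, A.Adj x z := by
  have : Nontrivial s := ⟨⟨⟨x, hx⟩, ⟨y, hy⟩, fun h => hxy (congrArg Subtype.val h)⟩⟩
  obtain ⟨z, hz⟩ := hs.preconnected.exists_adj_of_nontrivial ⟨x, hx⟩
  exact ⟨z, z.2, hz⟩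

lemma exists_disjoint_of_ncard_le_two {s : Set α} (hs : s.Finite) (h2 : s.ncard ≤ 2)
    (P : Fin 3 → Set α) (hP : Pairwise (Disjoint on P)) : ∃ m, Disjoint (P m) s := by
  by_contra! h
  choose z hz using fun m => Set.not_disjoint_iff.1 (h m)
  have hz_inj : Injective z := fun m m' e => by
    by_contra hne
    exact Set.disjoint_left.1 (hP hne) (hz m).1 (e ▸ (hz m').1)
  have := Set.ncard_le_ncard (Set.range_subset_iff.2 fun m => (hz m).2) hs
  rw [Set.ncard_range_of_injective hz_inj, Nat.card_eq_fintype_card, Fintype.card_fin] at this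
  omega

lemma exists_center_or_triangle (R : α → α → Prop) (hR : ∀ a b, R a b → R b a) (S : Set α)
    (g : Fin 3 → α) (hS : S ⊆ Set.range g) :
    (∃ c, ∀ a ∈ S, ∀ b ∈ S, a ≠ c → b ≠ c → a ≠ b → ¬R a b) ∨
      ∀ i j, i ≠ j → g i ∈ S ∧ R (g i) (g j) := by
  by_contra! h
  obtain ⟨hcenter, i, j, hij, hbad⟩ := h
  obtain ⟨k, hki, hkj⟩ : ∃ k : Fin 3, k ≠ i ∧ k ≠ j := by
    have : ∀ i j : Fin 3, ∃ k, k ≠ i ∧ k ≠ j := by decide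
    exact this i j
  obtain ⟨_, ha, _, hb, hak, hbk, hab, hR'⟩ := hcenter (g k)
  obtain ⟨a, rfl⟩ := hS ha
  obtain ⟨b, rfl⟩ := hS hb
  have : (a = i ∧ b = j) ∨ (a = j ∧ b = i) := by
    have : ∀ a b i j k : Fin 3, i ≠ j → k ≠ i → k ≠ j → a ≠ k → b ≠ k → a ≠ b →
        (a = i ∧ b = j) ∨ (a = j ∧ b = i) := by decide
    exact this a b i j k hij hki hkj (ne_of_apply_ne g hak) (ne_of_apply_ne g hbk)
      (ne_of_apply_ne g hab)
  rcases this with ⟨rfl, rfl⟩ | ⟨rfl, rfl⟩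
  · exact hbad ha hR'
  · exact hbad hb (hR _ _ hR')

end General

section Minor
variable {W V : Type} {H : SimpleGraph W} {G : SimpleGraph V}

def HasEdgeBetween (G : SimpleGraph V) (s t : Set V) : Prop :=
  ∃ x ∈ s, ∃ y ∈ t, G.Adj x y

lemma HasEdgeBetween.symm {s t : Set V} (h : HasEdgeBetween G s t) : HasEdgeBetween G t s :=
  let ⟨x, hx, y, hy, hxy⟩ := h
  ⟨y, hy, x, hx, hxy.symm⟩

structure IsMinorModel (H : SimpleGraph W) (G : SimpleGraph V) (f : W → Set V) : Prop where
  nonempty : ∀ w, (f w).Nonempty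
  connected : ∀ w, (G.induce (f w)).Connected
  disjoint : Pairwise (Disjoint on f)
  hasEdgeBetween : ∀ ⦃w w'⦄, H.Adj w w' → HasEdgeBetween G (f w) (f w')

lemma graphMinor_iff : GraphMinor H G ↔ ∃ f, IsMinorModel H G f :=
  ⟨fun ⟨f, h₁, h₂, h₃, h₄⟩ => ⟨f, h₁, h₂, fun _ _ h => h₃ _ _ h, fun _ _ h => h₄ _ _ h⟩,
    fun ⟨f, hf⟩ => ⟨f, hf.1, hf.2, fun _ _ h => hf.3 h, fun _ _ h => hf.4 h⟩⟩

namespace IsMinorModel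
variable {f : W → Set V} (hf : IsMinorModel H G f)
include hf

lemma eq_of_mem {x : V} {w w' : W} (hw : x ∈ f w) (hw' : x ∈ f w') : w = w' := by
  by_contra h
  exact Set.disjoint_left.mp (hf.disjoint h) hw hw'

lemma exists_injective_neighbors {w : W} {x : V} (hw : f w = {x}) {ι : Type*} {y : ι → W}
    (hy : Injective y) (hadj : ∀ m, H.Adj w (y m)) :
    ∃ z : ι → V, Injective z ∧ ∀ m, G.Adj x (z m) ∧ z m ∈ f (y m) := by
  have (m : ι) : ∃ z ∈ f (y m), G.Adj x z := by
    obtain ⟨x', hx', z, hz, h⟩ := hf.hasEdgeBetween (hadj m)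
    rw [hw, Set.mem_singleton_iff] at hx'
    exact ⟨z, hz, hx' ▸ h⟩
  choose z hz hxz using this
  exact ⟨z, fun m m' h => hy (hf.eq_of_mem (hz m) (h ▸ hz m')), fun m => ⟨hxz m, hz m⟩⟩

end IsMinorModel
end Minor

section Truncation
variable {V : Type} {G : SimpleGraph V} {v : V} {u : Fin 3 → V}

@[simp] lemma truncateVertex_adj_inl_inl {a b : {w : V // w ≠ v}} :
    (truncateVertex G v u).Adj (.inl a) (.inl b) ↔ G.Adj a b := by
  simp only [truncateVertex, fromRel_adj]
  exact ⟨fun ⟨_, h⟩ => h.elim id .symm,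
    fun h => ⟨fun e => h.ne (congrArg Subtype.val (Sum.inl.inj e)), .inl h⟩⟩

@[simp] lemma truncateVertex_adj_inl_inr {a : {w : V // w ≠ v}} {i : Fin 3} :
    (truncateVertex G v u).Adj (.inl a) (.inr i) ↔ a.1 = u i := by
  simp [truncateVertex, fromRel_adj]

@[simp] lemma truncateVertex_adj_inr_inl {a : {w : V // w ≠ v}} {i : Fin 3} :
    (truncateVertex G v u).Adj (.inr i) (.inl a) ↔ a.1 = u i := by
  rw [adj_comm, truncateVertex_adj_inl_inr]

@[simp] lemma truncateVertex_adj_inr_inr {i j : Fin 3} :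
    (truncateVertex G v u).Adj (.inr i : {w : V // w ≠ v} ⊕ Fin 3) (.inr j) ↔ i ≠ j := by
  simp only [truncateVertex, fromRel_adj, ne_eq, Sum.inr.injEq]
  exact ⟨fun h => h.1, fun h => ⟨h, .inl h⟩⟩

lemma neighborSet_eq_range (hu : Injective u) (hadj : ∀ i, G.Adj v (u i))
    (hv : (G.neighborSet v).ncard = 3) : G.neighborSet v = Set.range u := by
  refine (Set.eq_of_subset_of_ncard_le
    (show Set.range u ⊆ G.neighborSet v from Set.range_subset_iff.2 hadj) ?_ ?_).symm
  · rw [hv, Set.ncard_range_of_injective hu, Nat.card_eq_fintype_card, Fintype.card_fin]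
  · exact Set.finite_of_ncard_ne_zero (by rw [hv]; decide)

lemma truncateVertex_neighborSet_inr (hv : ∀ i, u i ≠ v) (k : Fin 3) :
    (truncateVertex G v u).neighborSet (.inr k) =
      {.inl ⟨u k, hv k⟩, .inr (k + 1), .inr (k + 2)} := by
  ext (a | j)
  · simp [Subtype.ext_iff]
  · simp only [mem_neighborSet, truncateVertex_adj_inr_inr, Set.mem_insert_iff, reduceCtorEq,
      Sum.inr.injEq, Set.mem_singleton_iff, false_or]
    fin_cases k <;> fin_cases j <;> decide

lemma ncard_truncateVertex_neighborSet_inr (hv : ∀ i, u i ≠ v) (k : Fin 3) :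
    ((truncateVertex G v u).neighborSet (.inr k)).ncard = 3 := by
  rw [truncateVertex_neighborSet_inr hv, Set.ncard_eq_three]
  refine ⟨_, _, _, by simp, by simp, ?_, rfl⟩
  simp only [ne_eq, Sum.inr.injEq]
  fin_cases k <;> decide

def collapse (v : V) : {w : V // w ≠ v} ⊕ Fin 3 → V := Sum.elim Subtype.val fun _ => v

@[simp] lemma collapse_inl (a : {w : V // w ≠ v}) : collapse v (.inl a) = a := rfl
@[simp] lemma collapse_inr (i : Fin 3) : collapse v (.inr i) = v := rfl

lemma collapse_adj_or_eq (hadj : ∀ i, G.Adj v (u i)) {a b : {w : V // w ≠ v} ⊕ Fin 3}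
    (h : (truncateVertex G v u).Adj a b) :
    G.Adj (collapse v a) (collapse v b) ∨ collapse v a = collapse v b := by
  rcases a with a | i <;> rcases b with b | j <;> simp only [truncateVertex_adj_inl_inl,
    truncateVertex_adj_inl_inr, truncateVertex_adj_inr_inl, truncateVertex_adj_inr_inr] at h
  · exact .inl h
  · exact .inl (by simpa [h] using (hadj j).symm)
  · exact .inl (by simpa [h] using hadj i)
  · exact .inr rfl

lemma ncard_truncateVertex_neighborSet_inl (hu : Injective u) (hadj : ∀ i, G.Adj v (u i))
    (hNv : G.neighborSet v = Set.range u) (w : {w : V // w ≠ v}) :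
    ((truncateVertex G v u).neighborSet (.inl w)).ncard = (G.neighborSet w).ncard := by
  refine Set.ncard_congr (fun a _ => collapse v a) ?_ ?_ ?_
  · rintro a ha
    rw [mem_neighborSet] at ha ⊢
    rcases collapse_adj_or_eq hadj ha with h | h
    · exact h
    · rcases a with a | i
      · exact absurd (congrArg Sum.inl (Subtype.ext h)) ha.ne
      · exact absurd h w.2
  · rintro (a | i) (b | j) ha hb h <;> simp only [mem_neighborSet, truncateVertex_adj_inl_inr,
      collapse_inl, collapse_inr] at ha hb h
    · exact congrArg _ (Subtype.ext h)
    · exact absurd h a.2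
    · exact absurd h.symm b.2
    · exact congrArg _ (hu (ha.symm.trans hb))
  · intro y hy
    by_cases hyv : y = v
    · subst hyv
      obtain ⟨i, hi⟩ : (w : V) ∈ Set.range u := hNv ▸ hy.symm
      exact ⟨.inr i, by simp [hi], rfl⟩
    · exact ⟨.inl ⟨y, hyv⟩, by simpa using hy, rfl⟩

lemma truncateVertex_regular (hu : Injective u) (hadj : ∀ i, G.Adj v (u i))
    (hreg : ∀ x, (G.neighborSet x).ncard = 3) (x : {w : V // w ≠ v} ⊕ Fin 3) :
    ((truncateVertex G v u).neighborSet x).ncard = 3 := by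
  rcases x with w | k
  · rw [ncard_truncateVertex_neighborSet_inl hu hadj (neighborSet_eq_range hu hadj (hreg v)),
      hreg]
  · exact ncard_truncateVertex_neighborSet_inr (fun i => (hadj i).ne') k

lemma card_truncateVertex [Finite V] (v : V) :
    Nat.card ({w : V // w ≠ v} ⊕ Fin 3) = Nat.card V + 2 := by
  have := Fintype.ofFinite V
  classical
  have := Fintype.card_pos_iff.2 ⟨v⟩
  simp only [Nat.card_eq_fintype_card, Fintype.card_sum, Fintype.card_fin,
    Fintype.card_subtype_compl, Fintype.card_unique]
  omega

end Truncation

section ThreeConnected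
variable {V : Type} {G : SimpleGraph V} {v : V} {u : Fin 3 → V}

open Classical in
noncomputable def liftVertex (v x : V) : {w : V // w ≠ v} ⊕ Fin 3 :=
  if h : x = v then .inr 0 else .inl ⟨x, h⟩

@[simp] lemma collapse_liftVertex (x : V) : collapse v (liftVertex v x) = x := by
  by_cases h : x = v <;> simp [liftVertex, h]

lemma liftVertex_of_ne (a : {w : V // w ≠ v}) : liftVertex v a = .inl a := by
  simp [liftVertex, a.2]

lemma not_mem_collapse_image {s : Set ({w : V // w ≠ v} ⊕ Fin 3)} {a : {w : V // w ≠ v}}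
    (ha : .inl a ∉ s) : (a : V) ∉ collapse v '' s := by
  rintro ⟨b | i, hb, h⟩
  · exact ha (Subtype.ext h ▸ hb)
  · exact a.2 h.symm

lemma truncateVertex_induce_compl_connected (hu : Injective u) (hadj : ∀ i, G.Adj v (u i))
    (hNv : G.neighborSet v = Set.range u) {s : Set ({w : V // w ≠ v} ⊕ Fin 3)}
    (hs : s.Finite) (hs2 : s.ncard ≤ 2) (hG : (G.induce (collapse v '' s)ᶜ).Connected) :
    ((truncateVertex G v u).induce sᶜ).Connected := by
  have hlift {x : V} (hx : x ∉ collapse v '' s) : liftVertex v x ∉ s :=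
    fun h => hx ⟨_, h, collapse_liftVertex x⟩
  have htri {i j : Fin 3} (hi : Sum.inr i ∉ s) (hj : Sum.inr j ∉ s) :
      ((truncateVertex G v u).induce sᶜ).Reachable ⟨.inr i, hi⟩ ⟨.inr j, hj⟩ := by
    by_cases hij : i = j
    · subst hij; rfl
    · exact Adj.reachable (by simpa using hij)
  have hv_nbr {y : V} (hv : v ∉ collapse v '' s) (hy : y ∉ collapse v '' s) (hvy : G.Adj v y) :
      ((truncateVertex G v u).induce sᶜ).Reachable ⟨_, hlift hv⟩ ⟨_, hlift hy⟩ := by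
    obtain ⟨i, rfl⟩ : y ∈ Set.range u := hNv ▸ hvy
    have hi : .inr i ∉ s := fun h => hv ⟨_, h, rfl⟩
    have h₀ : liftVertex v v = .inr 0 := by simp [liftVertex]
    simp only [h₀, liftVertex_of_ne ⟨u i, hvy.ne'⟩]
    exact (htri _ hi).trans (Adj.reachable (by simp))
  obtain ⟨⟨x₀, hx₀⟩⟩ := hG.nonempty
  have : Nonempty ↥sᶜ := ⟨⟨_, hlift hx₀⟩⟩
  refine ⟨hG.preconnected.of_map_reachable (fun x => ⟨liftVertex v x, hlift x.2⟩) ?_ ?_⟩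
  · rintro ⟨x, hx⟩ ⟨y, hy⟩ (hxy : G.Adj x y)
    by_cases hxv : x = v
    · subst hxv; exact hv_nbr hx hy hxy
    by_cases hyv : y = v
    · subst hyv; exact (hv_nbr hy hx hxy.symm).symm
    exact Adj.reachable (by simpa [liftVertex_of_ne ⟨x, hxv⟩, liftVertex_of_ne ⟨y, hyv⟩] using hxy)
  · rintro ⟨a | i, ha⟩
    · exact ⟨⟨a, not_mem_collapse_image ha⟩, by simp only [liftVertex_of_ne]; rfl⟩
    · have huv (m : Fin 3) : u m ≠ v := (hadj m).ne'
      obtain ⟨m, hm⟩ := exists_disjoint_of_ncard_le_two hs hs2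
        (fun m => {.inr m, .inl ⟨u m, huv m⟩}) (fun m m' hmm' => by simp [hmm'.symm, hu.ne_iff])
      simp only [Set.disjoint_insert_left, Set.disjoint_singleton_left] at hm
      refine ⟨⟨u m, not_mem_collapse_image hm.2⟩, ?_⟩
      simp only [liftVertex_of_ne ⟨u m, huv m⟩]
      exact (Adj.reachable (by simp) : ((truncateVertex G v u).induce sᶜ).Reachable
        ⟨.inl ⟨u m, huv m⟩, hm.2⟩ ⟨.inr m, hm.1⟩).trans (htri hm.1 ha)

lemma ThreeConnected.truncateVertex [Finite V] (hu : Injective u) (hadj : ∀ i, G.Adj v (u i))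
    (hv : (G.neighborSet v).ncard = 3) (h3 : ThreeConnected G) :
    ThreeConnected (truncateVertex G v u) := by
  refine ⟨by rw [card_truncateVertex]; linarith [h3.1], fun s hs => ?_⟩
  have hfin : s.Finite := Set.toFinite s
  exact truncateVertex_induce_compl_connected hu hadj (neighborSet_eq_range hu hadj hv) hfin hs
    (h3.2 _ ((Set.ncard_image_le hfin).trans hs))

end ThreeConnected

section OldPart
variable {V : Type} {G : SimpleGraph V} {v : V} {u : Fin 3 → V}

def oldPart (s : Set ({w : V // w ≠ v} ⊕ Fin 3)) : Set V := Subtype.val '' (Sum.inl ⁻¹' s)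

lemma not_mem_oldPart (s : Set ({w : V // w ≠ v} ⊕ Fin 3)) : v ∉ oldPart s := by
  rintro ⟨a, _, h⟩
  exact a.2 h

lemma oldPart_subset_collapse_image (s : Set ({w : V // w ≠ v} ⊕ Fin 3)) :
    oldPart s ⊆ collapse v '' s := by
  rintro _ ⟨a, ha, rfl⟩
  exact ⟨_, ha, rfl⟩

lemma collapse_image_eq_oldPart {s : Set ({w : V // w ≠ v} ⊕ Fin 3)} (hs : ∀ i, .inr i ∉ s) :
    collapse v '' s = oldPart s := by
  refine (oldPart_subset_collapse_image s).antisymm' ?_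
  rintro _ ⟨a | i, ha, rfl⟩
  · exact ⟨a, ha, rfl⟩
  · exact absurd ha (hs i)

lemma disjoint_collapse_image_oldPart {s t : Set ({w : V // w ≠ v} ⊕ Fin 3)} (h : Disjoint s t) :
    Disjoint (collapse v '' s) (oldPart t) := by
  refine Set.disjoint_left.2 ?_
  rintro _ ⟨a | i, ha, rfl⟩ ⟨b, hb, hab⟩
  · exact Set.disjoint_left.1 h ha (Subtype.ext hab ▸ hb)
  · exact b.2 hab

lemma disjoint_oldPart {s t : Set ({w : V // w ≠ v} ⊕ Fin 3)} (h : Disjoint s t) :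
    Disjoint (oldPart s) (oldPart t) :=
  (disjoint_collapse_image_oldPart h).mono_left (oldPart_subset_collapse_image s)

lemma SimpleGraph.Connected.collapse_image (hadj : ∀ i, G.Adj v (u i))
    {s : Set ({w : V // w ≠ v} ⊕ Fin 3)} (hs : ((truncateVertex G v u).induce s).Connected) :
    (G.induce (collapse v '' s)).Connected :=
  hs.induce_image _ fun _ _ _ _ h => collapse_adj_or_eq hadj h

lemma eq_singleton_of_not_mem_oldPart {s : Set ({w : V // w ≠ v} ⊕ Fin 3)}
    (hs : ((truncateVertex G v u).induce s).Connected) {c : Fin 3} (hc : .inr c ∈ s)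
    (hu : u c ∉ oldPart s) (hsub : ∀ j, .inr j ∈ s → j = c) : s = {.inr c} := by
  refine Set.eq_singleton_iff_unique_mem.2 ⟨hc, fun x hx => ?_⟩
  by_contra hxc
  obtain ⟨b | j, hb, hcb⟩ := hs.exists_adj_of_mem hc hx (Ne.symm hxc)
  · exact hu ⟨b, hb, by simpa using hcb⟩
  · exact (by simpa using hcb : c ≠ j) (hsub j hb).symm

/-- `s` contains at most one vertex `vᵢ` of the new triangle, and then also `u i`. -/
structure IsTame (u : Fin 3 → V) (s : Set ({w : V // w ≠ v} ⊕ Fin 3)) : Prop where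
  outer_mem : ∀ i, .inr i ∈ s → u i ∈ oldPart s
  eq_of_mem : ∀ i j, .inr i ∈ s → .inr j ∈ s → i = j

lemma isTame_of_forall_not_mem {s : Set ({w : V // w ≠ v} ⊕ Fin 3)} (hs : ∀ i, .inr i ∉ s) :
    IsTame u s :=
  ⟨fun i hi => absurd hi (hs i), fun i _ hi => absurd hi (hs i)⟩

namespace IsTame
variable {s : Set ({w : V // w ≠ v} ⊕ Fin 3)} (ht : IsTame u s)
include ht

lemma oldPart_nonempty (hs : s.Nonempty) : (oldPart s).Nonempty := by
  obtain ⟨a | i, ha⟩ := hs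
  · exact ⟨a, a, ha, rfl⟩
  · exact ⟨u i, ht.outer_mem i ha⟩

lemma oldPart_connected (hs : ((truncateVertex G v u).induce s).Connected) :
    (G.induce (oldPart s)).Connected := by
  -- push each triangle vertex `vᵢ` of `s` onto `u i`
  have himage : Sum.elim Subtype.val u '' s = oldPart s := by
    refine Set.Subset.antisymm ?_ fun _ ⟨a, ha, hx⟩ => ⟨_, ha, hx⟩
    rintro _ ⟨a | i, ha, rfl⟩
    · exact ⟨a, ha, rfl⟩
    · exact ht.outer_mem i ha
  rw [← himage]
  refine hs.induce_image _ ?_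
  rintro (a | i) ha (b | j) hb h <;> simp only [truncateVertex_adj_inl_inl,
    truncateVertex_adj_inl_inr, truncateVertex_adj_inr_inl, truncateVertex_adj_inr_inr] at h
  · exact .inl h
  · exact .inr h
  · exact .inr h.symm
  · exact absurd (ht.eq_of_mem i j ha hb) h

lemma hasEdgeBetween_collapse_image (hadj : ∀ i, G.Adj v (u i))
    {r : Set ({w : V // w ≠ v} ⊕ Fin 3)} (hrs : Disjoint r s)
    (h : HasEdgeBetween (truncateVertex G v u) r s) :
    HasEdgeBetween G (collapse v '' r) (oldPart s) := by
  obtain ⟨a | i, ha, b | j, hb, hab⟩ := h <;> simp only [truncateVertex_adj_inl_inl,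
    truncateVertex_adj_inl_inr, truncateVertex_adj_inr_inl, truncateVertex_adj_inr_inr] at hab
  · exact ⟨a, ⟨_, ha, rfl⟩, b, ⟨b, hb, rfl⟩, hab⟩
  · obtain ⟨b, hb, hbj⟩ := ht.outer_mem j hb
    exact absurd (Subtype.ext (hab.trans hbj.symm) ▸ ha) (Set.disjoint_right.1 hrs hb)
  · exact ⟨v, ⟨_, ha, rfl⟩, b, ⟨b, hb, rfl⟩, hab ▸ hadj i⟩
  · exact ⟨v, ⟨_, ha, rfl⟩, u j, ht.outer_mem j hb, hadj j⟩

lemma hasEdgeBetween_oldPart (hadj : ∀ i, G.Adj v (u i)) {r : Set ({w : V // w ≠ v} ⊕ Fin 3)}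
    (hr : ∀ i, .inr i ∉ r) (hrs : Disjoint r s) (h : HasEdgeBetween (truncateVertex G v u) r s) :
    HasEdgeBetween G (oldPart r) (oldPart s) :=
  collapse_image_eq_oldPart hr ▸ ht.hasEdgeBetween_collapse_image hadj hrs h

end IsTame
end OldPart

namespace IsMinorModel
variable {V W : Type} {G : SimpleGraph V} {v : V} {u : Fin 3 → V} {H : SimpleGraph W}
  {f : W → Set ({w : V // w ≠ v} ⊕ Fin 3)} (hf : IsMinorModel H (truncateVertex G v u) f)
include hf

lemma ncard_le_of_eq_singleton_inr (hv : ∀ i, u i ≠ v) {w : W} {c : Fin 3}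
    (hw : f w = {.inr c}) {n : ℕ} {y : Fin n → W} (hy : Injective y) (hadj : ∀ m, H.Adj w (y m)) :
    n ≤ 3 := by
  obtain ⟨z, hz, hzc⟩ := hf.exists_injective_neighbors hw hy hadj
  have := Set.ncard_le_ncard (show Set.range z ⊆ (truncateVertex G v u).neighborSet (.inr c) from
    Set.range_subset_iff.2 fun m => (hzc m).1)
    (Set.finite_of_ncard_ne_zero (by rw [ncard_truncateVertex_neighborSet_inr hv]; decide))
  rwa [Set.ncard_range_of_injective hz, Nat.card_eq_fintype_card, Fintype.card_fin,
    ncard_truncateVertex_neighborSet_inr hv] at this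

lemma exists_neighbors_of_eq_singleton_inr (hv : ∀ i, u i ≠ v) {w : W} {c : Fin 3}
    (hw : f w = {.inr c}) (hdeg : ∃ y : Fin 3 → W, Injective y ∧ ∀ m, H.Adj w (y m)) :
    ∃ y : Fin 3 → W, ∃ z : Fin 3 → {w : V // w ≠ v} ⊕ Fin 3, Injective y ∧
      Set.range z = (truncateVertex G v u).neighborSet (.inr c) ∧
      ∀ m, H.Adj w (y m) ∧ z m ∈ f (y m) := by
  obtain ⟨y, hy, hadj⟩ := hdeg
  obtain ⟨z, hz, hzc⟩ := hf.exists_injective_neighbors hw hy hadj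
  refine ⟨y, z, hy, Set.eq_of_subset_of_ncard_le (show Set.range z ⊆
    (truncateVertex G v u).neighborSet (.inr c) from Set.range_subset_iff.2 fun m => (hzc m).1) ?_
    (Set.finite_of_ncard_ne_zero ?_), fun m => ⟨hadj m, (hzc m).2⟩⟩ <;>
  rw [ncard_truncateVertex_neighborSet_inr hv]
  · rw [Set.ncard_range_of_injective hz, Nat.card_eq_fintype_card, Fintype.card_fin]
  · decide

variable (hadj : ∀ i, G.Adj v (u i))
include hadj

lemma hasEdgeBetween_oldPart {w w' : W} (hw : IsTame u (f w)) (hw' : IsTame u (f w'))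
    (h : H.Adj w w') (hT : (∀ k, .inr k ∉ f w) ∨ (∀ k, .inr k ∉ f w')) :
    HasEdgeBetween G (oldPart (f w)) (oldPart (f w')) := by
  rcases hT with hT | hT
  · exact hw'.hasEdgeBetween_oldPart hadj hT (hf.disjoint h.ne) (hf.hasEdgeBetween h)
  · exact (hw.hasEdgeBetween_oldPart hadj hT (hf.disjoint h.ne.symm)
      (hf.hasEdgeBetween h.symm)).symm

/-- The branch set `f ws` collapses onto `v`, every other one is replaced by its old part. -/
lemma graphMinor_of_isTame (ws : W) (htame : ∀ w ≠ ws, IsTame u (f w))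
    (hlink : ∀ w w', w ≠ ws → w' ≠ ws → H.Adj w w' →
      HasEdgeBetween G (oldPart (f w)) (oldPart (f w'))) :
    GraphMinor H G := by
  classical
  set F := Function.update (fun w => oldPart (f w)) ws (collapse v '' f ws)
  have hFs : F ws = collapse v '' f ws := Function.update_self ..
  have hF {w} (hw : w ≠ ws) : F w = oldPart (f w) := Function.update_of_ne hw ..
  refine graphMinor_iff.2 ⟨F, fun w => ?_, fun w => ?_, fun w w' hww' => ?_, fun w w' h => ?_⟩
  · rcases eq_or_ne w ws with rfl | hw
    · exact hFs ▸ (hf.nonempty w).image _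
    · exact hF hw ▸ (htame w hw).oldPart_nonempty (hf.nonempty w)
  · rcases eq_or_ne w ws with rfl | hw
    · exact hFs ▸ (hf.connected w).collapse_image hadj
    · exact hF hw ▸ (htame w hw).oldPart_connected (hf.connected w)
  · change Disjoint (F w) (F w')
    rcases eq_or_ne w ws with rfl | hw
    · exact hFs ▸ hF hww'.symm ▸ disjoint_collapse_image_oldPart (hf.disjoint hww')
    rcases eq_or_ne w' ws with rfl | hw'
    · exact hFs ▸ hF hww' ▸ (disjoint_collapse_image_oldPart (hf.disjoint hww'.symm)).symm
    · exact hF hw ▸ hF hw' ▸ disjoint_oldPart (hf.disjoint hww')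
  · rcases eq_or_ne w ws with rfl | hw
    · exact hFs ▸ hF h.ne.symm ▸ (htame w' h.ne.symm).hasEdgeBetween_collapse_image hadj
        (hf.disjoint h.ne) (hf.hasEdgeBetween h)
    rcases eq_or_ne w' ws with rfl | hw'
    · exact hFs ▸ hF hw ▸ ((htame w hw).hasEdgeBetween_collapse_image hadj
        (hf.disjoint h.ne.symm) (hf.hasEdgeBetween h.symm)).symm
    · exact hF hw ▸ hF hw' ▸ hlink w w' hw hw' h

variable (hdeg : ∀ w, ∃ y : Fin 3 → W, Injective y ∧ ∀ m, H.Adj w (y m))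
include hdeg

lemma graphMinor_of_two_mem {w₀ : W} {i j : Fin 3} (hij : i ≠ j) (hi : .inr i ∈ f w₀)
    (hj : .inr j ∈ f w₀) : GraphMinor H G := by
  have hthird {w k} (hw : w ≠ w₀) (hk : .inr k ∈ f w) : k ≠ i ∧ k ≠ j :=
    ⟨fun h => hw (hf.eq_of_mem hk (h ▸ hi)), fun h => hw (hf.eq_of_mem hk (h ▸ hj))⟩
  have hunique {w w' k k'} (hw : w ≠ w₀) (hw' : w' ≠ w₀) (hk : .inr k ∈ f w)
      (hk' : .inr k' ∈ f w') : k = k' := by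
    have : ∀ a b i j : Fin 3, i ≠ j → a ≠ i → a ≠ j → b ≠ i → b ≠ j → a = b := by decide
    exact this k k' i j hij (hthird hw hk).1 (hthird hw hk).2 (hthird hw' hk').1 (hthird hw' hk').2
  have htame (w) (hw : w ≠ w₀) : IsTame u (f w) := by
    refine ⟨fun c hc => ?_, fun a b ha hb => hunique hw hw ha hb⟩
    by_contra hcu
    have hsing := eq_singleton_of_not_mem_oldPart (hf.connected w) hc hcu
      fun k hk => hunique hw hw hk hc
    -- `vᵢ` and `vⱼ` are neighbours of `v_c`, so they would lie in distinct branch sets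
    obtain ⟨y, z, hy, hz, hyz⟩ :=
      hf.exists_neighbors_of_eq_singleton_inr (fun k => (hadj k).ne') hsing (hdeg w)
    obtain ⟨m, hm⟩ : .inr i ∈ Set.range z := hz ▸ by simpa using (hthird hw hc).1
    obtain ⟨m', hm'⟩ : .inr j ∈ Set.range z := hz ▸ by simpa using (hthird hw hc).2
    have hyy : y m = y m' :=
      (hf.eq_of_mem (hm ▸ (hyz m).2) hi).trans (hf.eq_of_mem (hm' ▸ (hyz m').2) hj).symm
    exact hij (Sum.inr.inj (hm.symm.trans ((congrArg z (hy hyy)).trans hm')))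
  refine hf.graphMinor_of_isTame hadj w₀ htame fun w w' hw hw' h => ?_
  refine hf.hasEdgeBetween_oldPart hadj (htame w hw) (htame w' hw') h ?_
  by_contra! hT
  obtain ⟨⟨k, hk⟩, ⟨k', hk'⟩⟩ := hT
  exact h.ne (hf.eq_of_mem hk (hunique hw hw' hk hk' ▸ hk'))

lemma graphMinor_of_center (hsub : ∀ w i j, .inr i ∈ f w → .inr j ∈ f w → i = j) (ws : W)
    (hws : ∀ w w' i j, .inr i ∈ f w → .inr j ∈ f w' → w ≠ ws → w' ≠ ws → H.Adj w w' →
      HasEdgeBetween G (oldPart (f w)) (oldPart (f w'))) :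
    GraphMinor H G := by
  have htame (w) (hw : w ≠ ws) : IsTame u (f w) := by
    refine ⟨fun c hc => ?_, hsub w⟩
    by_contra hcu
    have hsing := eq_singleton_of_not_mem_oldPart (hf.connected w) hc hcu
      fun k hk => hsub w k c hk hc
    -- one of the two other triangle vertices lies in a neighbouring branch set other than `f ws`,
    -- which must then be joined to the empty old part of `f w`
    obtain ⟨y, z, hy, hz, hyz⟩ :=
      hf.exists_neighbors_of_eq_singleton_inr (fun k => (hadj k).ne') hsing (hdeg w)
    obtain ⟨a, b, hab, hac, hbc⟩ : ∃ a b : Fin 3, a ≠ b ∧ a ≠ c ∧ b ≠ c := by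
      have : ∀ c : Fin 3, ∃ a b : Fin 3, a ≠ b ∧ a ≠ c ∧ b ≠ c := by decide
      exact this c
    obtain ⟨m, hm⟩ : .inr a ∈ Set.range z := hz ▸ by simpa using hac.symm
    obtain ⟨m', hm'⟩ : .inr b ∈ Set.range z := hz ▸ by simpa using hbc.symm
    obtain ⟨n, k, hn, hk⟩ : ∃ n k, y n ≠ ws ∧ .inr k ∈ f (y n) := by
      by_cases h : y m = ws
      · exact ⟨m', b, fun h' => hab (hsub ws a b (h ▸ hm ▸ (hyz m).2) (h' ▸ hm' ▸ (hyz m').2)),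
          hm' ▸ (hyz m').2⟩
      · exact ⟨m, a, h, hm ▸ (hyz m).2⟩
    obtain ⟨_, ⟨_, hx, -⟩, -⟩ := hws w (y n) c k hc hk hw hn (hyz n).1
    simp [hsing] at hx
  refine hf.graphMinor_of_isTame hadj ws htame fun w w' hw hw' h => ?_
  by_cases hT : (∀ k, .inr k ∉ f w) ∨ (∀ k, .inr k ∉ f w')
  · exact hf.hasEdgeBetween_oldPart hadj (htame w hw) (htame w' hw') h hT
  · push Not at hT
    obtain ⟨⟨i, hi⟩, ⟨j, hj⟩⟩ := hT
    exact hws w w' i j hi hj hw hw' h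

theorem graphMinor_or_triangle [Nonempty W] :
    GraphMinor H G ∨ ∃ g : Fin 3 → W, (∀ i, .inr i ∈ f (g i)) ∧
      ∀ i j, i ≠ j → H.Adj (g i) (g j) := by
  by_cases hD : ∃ w i j, i ≠ j ∧ .inr i ∈ f w ∧ .inr j ∈ f w
  · obtain ⟨w, i, j, hij, hi, hj⟩ := hD
    exact .inl (hf.graphMinor_of_two_mem hadj hdeg hij hi hj)
  have hsub (w i j) (hi : .inr i ∈ f w) (hj : .inr j ∈ f w) : i = j := by
    by_contra hij
    exact hD ⟨w, i, j, hij, hi, hj⟩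
  have (i : Fin 3) : ∃ w₀, ∀ w, .inr i ∈ f w → w = w₀ := by
    by_cases h : ∃ w, .inr i ∈ f w
    · obtain ⟨w₀, h₀⟩ := h
      exact ⟨w₀, fun w hw => hf.eq_of_mem hw h₀⟩
    · exact ⟨Classical.arbitrary W, fun w hw => (h ⟨w, hw⟩).elim⟩
  choose g hg using this
  rcases exists_center_or_triangle
    (fun w w' => H.Adj w w' ∧ ¬HasEdgeBetween G (oldPart (f w)) (oldPart (f w')))
    (fun _ _ h => ⟨h.1.symm, fun h' => h.2 h'.symm⟩) {w | ∃ i, .inr i ∈ f w} g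
    (fun w ⟨i, hi⟩ => ⟨i, (hg i w hi).symm⟩) with ⟨ws, hws⟩ | hall
  · refine .inl (hf.graphMinor_of_center hadj hdeg hsub ws fun w w' i j hi hj hw hw' h => ?_)
    by_contra hne
    exact hws w ⟨i, hi⟩ w' ⟨j, hj⟩ hw hw' h.ne ⟨h, hne⟩
  · refine .inr ⟨g, fun i => ?_, fun i j hij => (hall i j hij).2.1⟩
    obtain ⟨j, hji⟩ := exists_ne i
    obtain ⟨k, hk⟩ := (hall i j hji.symm).1
    rcases eq_or_ne k i with rfl | hki
    · exact hk
    · exact absurd (hg k _ hk) (hall i k hki.symm).2.1.ne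

end IsMinorModel

lemma exists_two_not_mem_range {g : Fin 3 → Fin 5} (hg : Injective g) :
    ∃ d e, d ≠ e ∧ d ∉ Set.range g ∧ e ∉ Set.range g := by
  have : (Finset.univ.image g)ᶜ.card = 2 := by
    rw [Finset.card_compl, Finset.card_image_of_injective _ hg]
    simp
  obtain ⟨d, e, hde, hde'⟩ := Finset.card_eq_two.1 this
  have hd : d ∈ (Finset.univ.image g)ᶜ := hde' ▸ by simp
  have he : e ∈ (Finset.univ.image g)ᶜ := hde' ▸ by simp
  exact ⟨d, e, hde, by simpa using hd, by simpa using he⟩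

namespace IsMinorModel
variable {V : Type} {G : SimpleGraph V} {v : V} {u : Fin 3 → V}
  {f : Fin 5 → Set ({w : V // w ≠ v} ⊕ Fin 3)}
  (hf : IsMinorModel (completeGraph (Fin 5)) (truncateVertex G v u) f)
  (hadj : ∀ i, G.Adj v (u i)) {g : Fin 3 → Fin 5} (hg : ∀ i, .inr i ∈ f (g i))
  (hg_inj : Injective g)
include hf hadj hg hg_inj

lemma isTame_of_completeGraph (w : Fin 5) : IsTame u (f w) := by
  by_cases hw : w ∈ Set.range g
  · obtain ⟨i, rfl⟩ := hw
    have hsub (k) (hk : .inr k ∈ f (g i)) : k = i := hg_inj (hf.eq_of_mem (hg k) hk)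
    refine ⟨fun c hc => ?_, fun a b ha hb => (hsub a ha).trans (hsub b hb).symm⟩
    by_contra hcu
    -- a branch set `{v_c}` of `K₅` would need four neighbours of `v_c`
    have := hf.ncard_le_of_eq_singleton_inr (fun k => (hadj k).ne')
      (eq_singleton_of_not_mem_oldPart (hf.connected _) hc hcu
        fun k hk => (hsub k hk).trans (hsub c hc).symm)
      Fin.succAbove_right_injective fun m => (Fin.succAbove_ne (g i) m).symm
    omega
  · exact isTame_of_forall_not_mem fun k hk => hw ⟨k, hf.eq_of_mem (hg k) hk⟩

/-- The `K₃,₃` model: `{v}` and the old parts of the two branch sets missing the triangle,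
against the old parts of the three branch sets containing it. -/
lemma graphMinor_completeBipartiteGraph :
    GraphMinor (completeBipartiteGraph (Fin 3) (Fin 3)) G := by
  have htame := hf.isTame_of_completeGraph hadj hg hg_inj
  obtain ⟨d, e, hde, hd, he⟩ := exists_two_not_mem_range hg_inj
  let B : Option (Fin 5) → Set V := fun o => o.elim {v} fun w => oldPart (f w)
  have hB_nonempty (o : Option (Fin 5)) : (B o).Nonempty := by
    rcases o with _ | w
    · exact ⟨v, rfl⟩
    · exact (htame w).oldPart_nonempty (hf.nonempty w)
  have hB_connected (o : Option (Fin 5)) : (G.induce (B o)).Connected := by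
    rcases o with _ | w
    · simp [B]
    · exact (htame w).oldPart_connected (hf.connected w)
  have hB_disjoint : Pairwise (Disjoint on B) := by
    rintro (_ | w) (_ | w') h
    · exact absurd rfl h
    · exact Set.disjoint_singleton_left.2 (not_mem_oldPart _)
    · exact Set.disjoint_singleton_right.2 (not_mem_oldPart _)
    · exact disjoint_oldPart (hf.disjoint fun h' => h (h' ▸ rfl))
  have hB_edge (o : Option (Fin 5)) (ho : ∀ i, o ≠ some (g i)) (j) :
      HasEdgeBetween G (B o) (B (some (g j))) := by
    rcases o with _ | w
    · exact ⟨v, rfl, u j, (htame _).outer_mem j (hg j), hadj j⟩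
    · have hw : w ∉ Set.range g := fun ⟨i, hi⟩ => ho i (hi ▸ rfl)
      exact hf.hasEdgeBetween_oldPart hadj (htame w) (htame _)
        (by simpa using fun h => hw ⟨j, h.symm⟩)
        (.inl fun k hk => hw ⟨k, hf.eq_of_mem (hg k) hk⟩)
  let left : Fin 3 → Option (Fin 5) := ![none, some d, some e]
  have hleft (p i) : left p ≠ some (g i) := by
    fin_cases p <;> simp [left] <;> rintro rfl <;> simp_all
  have hleft_inj : Injective left := by
    intro p q h
    fin_cases p <;> fin_cases q <;> simp_all [left]
  have hside_inj : Injective (Sum.elim left fun i => some (g i)) :=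
    hleft_inj.sumElim (Option.some_injective _ |>.comp hg_inj) hleft
  refine graphMinor_iff.2 ⟨B ∘ Sum.elim left fun i => some (g i), fun x => hB_nonempty _,
    fun x => hB_connected _, hB_disjoint.comp_of_injective hside_inj, ?_⟩
  rintro (p | p) (q | q) h <;> simp only [completeBipartiteGraph_adj, Sum.isLeft_inl,
    Sum.isRight_inl, Sum.isLeft_inr, Sum.isRight_inr] at h <;> simp at h
  · exact hB_edge _ (hleft p) q
  · exact (hB_edge _ (hleft q) p).symm

end IsMinorModel

lemma IsPlanar.truncateVertex {V : Type} {G : SimpleGraph V} {v : V} {u : Fin 3 → V}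
    (hadj : ∀ i, G.Adj v (u i)) (hpl : IsPlanar G) : IsPlanar (truncateVertex G v u) := by
  refine ⟨fun hK₅ => ?_, fun hK₃₃ => ?_⟩
  · obtain ⟨f, hf⟩ := graphMinor_iff.1 hK₅
    rcases hf.graphMinor_or_triangle hadj
      (fun w => ⟨w.succAbove ∘ Fin.castSucc, Fin.succAbove_right_injective.comp
        (Fin.castSucc_injective _), fun m => (Fin.succAbove_ne w _).symm⟩)
      with h | ⟨g, hg, hg_adj⟩
    · exact hpl.1 h
    · exact hpl.2 (hf.graphMinor_completeBipartiteGraph hadj hg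
        fun i j h => by_contra fun hij => (hg_adj i j hij).ne h)
  · obtain ⟨f, hf⟩ := graphMinor_iff.1 hK₃₃
    rcases hf.graphMinor_or_triangle hadj
      (fun w => ⟨fun m => w.elim (fun _ => .inr m) (fun _ => .inl m),
        by rcases w with w | w <;> intro m m' <;> simp, by rcases w with w | w <;> simp⟩)
      with h | ⟨g, -, hg_adj⟩
    · exact hpl.2 h
    · have hK₃₃_triangle_free (a b c : Fin 3 ⊕ Fin 3) :
          (completeBipartiteGraph (Fin 3) (Fin 3)).Adj a b →
          (completeBipartiteGraph (Fin 3) (Fin 3)).Adj a c →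
          ¬(completeBipartiteGraph (Fin 3) (Fin 3)).Adj b c := by
        rcases a with a | a <;> rcases b with b | b <;> rcases c with c | c <;> simp
      exact hK₃₃_triangle_free _ _ _ (hg_adj 0 1 (by decide)) (hg_adj 0 2 (by decide))
        (hg_adj 1 2 (by decide))

/-- Truncating a vertex of a 3-connected 3-regular planar graph yields again a
3-connected 3-regular planar graph, with two more vertices. -/
theorem truncateVertex_properties {V : Type} [Fintype V] (G : SimpleGraph V)
    (v : V) (u : Fin 3 → V)
    (h3 : ThreeConnected G) (hreg : ∀ x : V, (G.neighborSet x).ncard = 3)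
    (hpl : IsPlanar G) (hu : Function.Injective u) (hadj : ∀ i, G.Adj v (u i)) :
    ThreeConnected (truncateVertex G v u) ∧
    (∀ x, ((truncateVertex G v u).neighborSet x).ncard = 3) ∧
    IsPlanar (truncateVertex G v u) ∧
    Nat.card ({w : V // w ≠ v} ⊕ Fin 3) = Nat.card V + 2 :=
  ⟨h3.truncateVertex hu hadj (hreg v), truncateVertex_regular hu hadj hreg,
    hpl.truncateVertex hadj, card_truncateVertex v⟩
end
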